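/- arXiv:0901.4063 — 9 statements merged into one kernel-verified Lean document; each statement's English description precedes it below -/
import Mathlib

section
/- Let ℓ = ∞, and let ξ : (0,∞) → V be locally absolutely continuous with ξ ∈ L²_ν((0,∞);V) and derivative ξ' ∈ L²_ν((0,∞);V). Then lim_{τ→∞} ξ(τ) = 0 in V. -/
/-!
Since `‖ξ'‖ ≤ (μ⁻¹ ‖ξ'‖² + μ) / 2` and `μ` is integrable, `ξ'` is integrable on `(1, ∞)`, so
`ξ τ = ξ 1 + ∫₁^τ ξ'` converges to some `L`. As `μ` is nonincreasing, `‖ξ‖² ≤ μ 1 · μ⁻¹ ‖ξ‖²`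
on `(1, ∞)`, so `‖ξ‖²` is integrable there too; a function integrable on a half-line can only
converge to `0`, hence `‖L‖² = 0`.
-/

open MeasureTheory Set Filter Topology

lemma two_mul_le_inv_mul_sq_add {m : ℝ} (hm : 0 < m) (x : ℝ) : 2 * x ≤ m⁻¹ * x ^ 2 + m := by
  have h : m⁻¹ * x ^ 2 + m - 2 * x = m⁻¹ * (x - m) ^ 2 := by field_simp; ring
  linarith [mul_nonneg (inv_pos.mpr hm).le (sq_nonneg (x - m))]

section HalfLine

variable {E : Type*} [NormedAddCommGroup E]

lemma aestronglyMeasurable_restrict_Ioi_of_forall_integrableOn_Icc {f : ℝ → E} {a : ℝ}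
    (hf : ∀ b, IntegrableOn f (Icc a b)) : AEStronglyMeasurable f (volume.restrict (Ioi a)) :=
  (aecover_Iic tendsto_id).aestronglyMeasurable fun b => by
    rw [Measure.restrict_restrict measurableSet_Iic, Iic_inter_Ioi]
    exact (hf b).1.mono_set Ioc_subset_Icc_self

lemma integrableOn_Ioi_of_integrableOn_inv_mul_norm_sq {f : ℝ → E} {w : ℝ → ℝ} {a : ℝ}
    (hf : ∀ b, IntegrableOn f (Icc a b)) (hw_pos : ∀ s ∈ Ioi a, 0 < w s)
    (hw : IntegrableOn w (Ioi a)) (hfw : IntegrableOn (fun s => (w s)⁻¹ * ‖f s‖ ^ 2) (Ioi a)) :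
    IntegrableOn f (Ioi a) := by
  refine Integrable.mono' ((hfw.add hw).div_const 2)
    (aestronglyMeasurable_restrict_Ioi_of_forall_integrableOn_Icc hf) ?_
  filter_upwards [ae_restrict_mem measurableSet_Ioi] with s hs
  rw [Pi.add_apply]
  linarith [two_mul_le_inv_mul_sq_add (hw_pos s hs) ‖f s‖]

lemma integrableOn_Ioi_of_antitoneOn_of_integrableOn_inv_mul {g w : ℝ → ℝ} {a b : ℝ}
    (hab : a < b) (hw_pos : ∀ s ∈ Ioi a, 0 < w s) (hw_anti : AntitoneOn w (Ioi a))
    (hgw : IntegrableOn (fun s => (w s)⁻¹ * g s) (Ioi a)) : IntegrableOn g (Ioi b) := by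
  have hsub : Ioi b ⊆ Ioi a := Ioi_subset_Ioi hab.le
  have hwg : IntegrableOn (fun s => w s * ((w s)⁻¹ * g s)) (Ioi b) := by
    refine (hgw.mono_set hsub).bdd_mul (c := w b)
      ((aemeasurable_restrict_of_antitoneOn measurableSet_Ioi hw_anti).aestronglyMeasurable.mono_set
        hsub) ?_
    filter_upwards [ae_restrict_mem measurableSet_Ioi] with s hs
    rw [Real.norm_of_nonneg (hw_pos s (hsub hs)).le]
    exact hw_anti hab (hsub hs) hs.le
  exact hwg.congr_fun (fun s hs => mul_inv_cancel_left₀ (hw_pos s (hsub hs)).ne' (g s))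
    measurableSet_Ioi

lemma eq_zero_of_tendsto_atTop_of_integrableOn_Ioi {f : ℝ → E} {a : ℝ} {c : E}
    (hf : IntegrableOn f (Ioi a)) (hc : Tendsto f atTop (𝓝 c)) : c = 0 :=
  IntegrableAtFilter.eq_zero_of_tendsto ⟨Ioi a, Ioi_mem_atTop a, hf⟩
    (fun s hs => by
      obtain ⟨b, hb⟩ := mem_atTop_sets.1 hs
      exact top_le_iff.1 (Real.volume_Ici (a := b) ▸ measure_mono hb))
    hc

lemma tendsto_atTop_of_eq_add_intervalIntegral [NormedSpace ℝ E] {f f' : ℝ → E} {a : ℝ}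
    (hf : ∀ b, a ≤ b → f b = f a + ∫ s in a..b, f' s) (hf' : IntegrableOn f' (Ioi a)) :
    Tendsto f atTop (𝓝 (f a + ∫ s in Ioi a, f' s)) :=
  ((intervalIntegral_tendsto_integral_Ioi a hf' tendsto_id).const_add (f a)).congr'
    (by filter_upwards [eventually_ge_atTop a] with b hb using (hf b hb).symm)

end HalfLine

theorem stmt2_general
    {V : Type*} [NormedAddCommGroup V] [InnerProductSpace ℝ V]
    (μ : ℝ → ℝ)
    (hμpos : ∀ s ∈ Ioi (0:ℝ), 0 < μ s)
    (hμmono : AntitoneOn μ (Ioi 0))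
    (hμint : IntegrableOn μ (Ioi 0))
    (ξ ξ' : ℝ → V)
    (hξ'loc : ∀ a b : ℝ, 0 < a → IntegrableOn ξ' (Icc a b))
    (hFTC : ∀ a b : ℝ, 0 < a → a ≤ b → ξ b = ξ a + ∫ s in a..b, ξ' s)
    (hξL2 : IntegrableOn (fun s => (μ s)⁻¹ * ‖ξ s‖ ^ 2) (Ioi 0))
    (hξ'L2 : IntegrableOn (fun s => (μ s)⁻¹ * ‖ξ' s‖ ^ 2) (Ioi 0)) :
    Tendsto ξ atTop (nhds (0 : V)) := by
  have hsub : Ioi (1 : ℝ) ⊆ Ioi 0 := Ioi_subset_Ioi zero_le_one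
  have hξ'int : IntegrableOn ξ' (Ioi 1) :=
    integrableOn_Ioi_of_integrableOn_inv_mul_norm_sq (fun b => hξ'loc 1 b one_pos)
      (fun s hs => hμpos s (hsub hs)) (hμint.mono_set hsub) (hξ'L2.mono_set hsub)
  have hlim := tendsto_atTop_of_eq_add_intervalIntegral (fun b hb => hFTC 1 b one_pos hb) hξ'int
  have hsq : IntegrableOn (fun s => ‖ξ s‖ ^ 2) (Ioi 1) :=
    integrableOn_Ioi_of_antitoneOn_of_integrableOn_inv_mul one_pos hμpos hμmono hξL2
  have hL := eq_zero_of_tendsto_atTop_of_integrableOn_Ioi hsq (hlim.norm.pow 2)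
  rw [pow_eq_zero_iff two_ne_zero, norm_eq_zero] at hL
  rwa [hL] at hlim

/-- Case `ℓ = ∞`, `Ω = (0,∞)`. If `ξ` is locally absolutely continuous
on `(0,∞)` with `ξ ∈ L²_ν` and derivative `ξ' ∈ L²_ν` (where `ν = 1/μ`), then
`ξ(τ) → 0` in `V` as `τ → ∞`. -/
theorem stmt2
    {V : Type*} [NormedAddCommGroup V] [InnerProductSpace ℝ V] [CompleteSpace V]
    (μ : ℝ → ℝ)
    (hμpos : ∀ s ∈ Ioi (0:ℝ), 0 < μ s)
    (hμmono : AntitoneOn μ (Ioi 0))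
    (hμint : IntegrableOn μ (Ioi 0))
    (ξ ξ' : ℝ → V)
    (hξ'loc : ∀ a b : ℝ, 0 < a → IntegrableOn ξ' (Icc a b))
    (hFTC : ∀ a b : ℝ, 0 < a → a ≤ b → ξ b = ξ a + ∫ s in a..b, ξ' s)
    (hξL2 : IntegrableOn (fun s => (μ s)⁻¹ * ‖ξ s‖ ^ 2) (Ioi 0))
    (hξ'L2 : IntegrableOn (fun s => (μ s)⁻¹ * ‖ξ' s‖ ^ 2) (Ioi 0)) :
    Tendsto ξ atTop (nhds (0 : V)) :=
  stmt2_general μ hμpos hμmono hμint ξ ξ' hξ'loc hFTC hξL2 hξ'L2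
end

section
/- Let ℓ = ∞, and let ξ : (0,∞) → V be locally absolutely continuous with ξ ∈ L²_ν((0,∞);V) and derivative ξ' ∈ L²_ν((0,∞);V). Then sup_{τ ∈ (0,∞)} ‖ξ(τ)‖_V < ∞. -/
open MeasureTheory Set

/-!
By AM–GM, `‖ξ'‖ ≤ (μ + μ⁻¹ ‖ξ'‖²) / 2`, so the integrability of `μ` and `ξ' ∈ L²_ν` give
`ξ' ∈ L¹(0,∞)`. Hence `‖ξ τ‖ ≤ ‖ξ 1‖ + ‖∫₁^τ ξ'‖ ≤ ‖ξ 1‖ + ‖ξ'‖_{L¹}` for every `τ > 0`.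
-/

lemma le_add_inv_mul_sq_div_two {m : ℝ} (hm : 0 < m) (x : ℝ) : x ≤ (m + m⁻¹ * x ^ 2) / 2 := by
  have key : x * 2 * m ≤ m ^ 2 + x ^ 2 := by nlinarith [sq_nonneg (m - x)]
  calc x = x * 2 * m / (2 * m) := by field_simp
    _ ≤ (m ^ 2 + x ^ 2) / (2 * m) := by gcongr
    _ = (m + m⁻¹ * x ^ 2) / 2 := by field_simp

lemma integrable_of_integrable_inv_mul_norm_sq {α E : Type*} [MeasurableSpace α]
    [NormedAddCommGroup E] {ν : Measure α} {w : α → ℝ} {f : α → E}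
    (hw : Integrable w ν) (hw_pos : ∀ᵐ x ∂ν, 0 < w x) (hf : AEStronglyMeasurable f ν)
    (hwf : Integrable (fun x => (w x)⁻¹ * ‖f x‖ ^ 2) ν) : Integrable f ν := by
  refine ((hw.add hwf).div_const 2).mono' hf ?_
  filter_upwards [hw_pos] with x hx
  exact le_add_inv_mul_sq_div_two hx _

lemma locallyIntegrableOn_Ioi_of_integrableOn_Icc {E : Type*} [NormedAddCommGroup E]
    {f : ℝ → E} {c : ℝ} (hf : ∀ a b : ℝ, c < a → IntegrableOn f (Icc a b)) :
    LocallyIntegrableOn f (Ioi c) := by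
  intro x (hx : c < x)
  refine ⟨Icc ((c + x) / 2) (x + 1), ?_, hf _ _ (by linarith)⟩
  exact nhdsWithin_le_nhds (Icc_mem_nhds (by linarith) (by linarith))

lemma norm_intervalIntegral_le_setIntegral_norm {E : Type*} [NormedAddCommGroup E]
    [NormedSpace ℝ E] {f : ℝ → E} {s : Set ℝ} {a b : ℝ} (hs : uIoc a b ⊆ s)
    (hf : IntegrableOn f s) : ‖∫ x in a..b, f x‖ ≤ ∫ x in s, ‖f x‖ :=
  (intervalIntegral.norm_integral_le_integral_norm_uIoc).trans <|
    setIntegral_mono_set hf.norm (ae_of_all _ fun _ => norm_nonneg _) hs.eventuallyLE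

lemma sub_eq_intervalIntegral_of_forall_eq_add {E : Type*} [NormedAddCommGroup E]
    [NormedSpace ℝ E] {g g' : ℝ → E} {s : Set ℝ}
    (hg : ∀ a b : ℝ, a ∈ s → a ≤ b → g b = g a + ∫ x in a..b, g' x)
    {a b : ℝ} (ha : a ∈ s) (hb : b ∈ s) : g b - g a = ∫ x in a..b, g' x := by
  rcases le_total a b with hab | hba
  · rw [hg a b ha hab, add_sub_cancel_left]
  · rw [hg b a hb hba, intervalIntegral.integral_symm, sub_add_cancel_left, neg_neg]

theorem stmt3_general
    {V : Type*} [NormedAddCommGroup V] [InnerProductSpace ℝ V]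
    (μ : ℝ → ℝ)
    (hμpos : ∀ s ∈ Ioi (0:ℝ), 0 < μ s)
    (hμint : IntegrableOn μ (Ioi 0))
    (ξ ξ' : ℝ → V)
    (hξ'loc : ∀ a b : ℝ, 0 < a → IntegrableOn ξ' (Icc a b))
    (hFTC : ∀ a b : ℝ, 0 < a → a ≤ b → ξ b = ξ a + ∫ s in a..b, ξ' s)
    (hξ'L2 : IntegrableOn (fun s => (μ s)⁻¹ * ‖ξ' s‖ ^ 2) (Ioi 0)) :
    ∃ C : ℝ, ∀ τ ∈ Ioi (0:ℝ), ‖ξ τ‖ ≤ C := by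
  have hξ'L1 : IntegrableOn ξ' (Ioi 0) :=
    integrable_of_integrable_inv_mul_norm_sq hμint
      ((ae_restrict_mem measurableSet_Ioi).mono hμpos)
      (locallyIntegrableOn_Ioi_of_integrableOn_Icc hξ'loc).aestronglyMeasurable hξ'L2
  refine ⟨‖ξ 1‖ + ∫ s in Ioi 0, ‖ξ' s‖, fun τ hτ => ?_⟩
  have h1τ : uIoc 1 τ ⊆ Ioi 0 := fun _ hx => (lt_min one_pos hτ).trans hx.1
  calc ‖ξ τ‖ ≤ ‖ξ 1‖ + ‖ξ τ - ξ 1‖ := norm_le_norm_add_norm_sub' _ _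
    _ = ‖ξ 1‖ + ‖∫ s in (1:ℝ)..τ, ξ' s‖ := by
      rw [sub_eq_intervalIntegral_of_forall_eq_add hFTC (mem_Ioi.2 one_pos) hτ]
    _ ≤ ‖ξ 1‖ + ∫ s in Ioi 0, ‖ξ' s‖ := by
      gcongr
      exact norm_intervalIntegral_le_setIntegral_norm h1τ hξ'L1

/-- Case `ℓ = ∞`, `Ω = (0,∞)`. If `ξ` is locally absolutely continuous
on `(0,∞)` with `ξ ∈ L²_ν` and derivative `ξ' ∈ L²_ν` (where `ν = 1/μ`), then
`sup_{τ ∈ (0,∞)} ‖ξ(τ)‖ < ∞`. -/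
theorem stmt3
    {V : Type*} [NormedAddCommGroup V] [InnerProductSpace ℝ V] [CompleteSpace V]
    (μ : ℝ → ℝ)
    (hμpos : ∀ s ∈ Ioi (0:ℝ), 0 < μ s)
    (hμmono : AntitoneOn μ (Ioi 0))
    (hμint : IntegrableOn μ (Ioi 0))
    (ξ ξ' : ℝ → V)
    (hξ'loc : ∀ a b : ℝ, 0 < a → IntegrableOn ξ' (Icc a b))
    (hFTC : ∀ a b : ℝ, 0 < a → a ≤ b → ξ b = ξ a + ∫ s in a..b, ξ' s)
    (hξL2 : IntegrableOn (fun s => (μ s)⁻¹ * ‖ξ s‖ ^ 2) (Ioi 0))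
    (hξ'L2 : IntegrableOn (fun s => (μ s)⁻¹ * ‖ξ' s‖ ^ 2) (Ioi 0)) :
    ∃ C : ℝ, ∀ τ ∈ Ioi (0:ℝ), ‖ξ τ‖ ≤ C :=
  stmt3_general μ hμpos hμint ξ ξ' hξ'loc hFTC hξ'L2
end

section
/- Let ℓ < ∞, and let ξ : Ω → V be locally absolutely continuous with derivative ξ' ∈ L²_ν(Ω;V) and lim_{τ→ℓ} ξ(τ) = 0 in V. Then for every τ ∈ Ω, ν(τ)‖ξ(τ)‖²_V ≤ (ℓ − τ) · ∫₀^ℓ ν(s)‖ξ'(s)‖²_V ds. -/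
open MeasureTheory Set Filter

/-!
Fix `τ` and put `x = ‖ξ τ‖`, `L = (ℓ - τ) μ(τ)`. For `τ ≤ b < ℓ` the fundamental theorem of
calculus gives `x ≤ ‖ξ b‖ + ∫_τ^b ‖ξ'‖`, and the pointwise AM–GM inequality
`2 x L ‖ξ'‖ ≤ x² μ + L² ν ‖ξ'‖²`, together with `μ ≤ μ(τ)` on `(τ, b)`, integrates to
`2 x ∫_τ^b ‖ξ'‖ ≤ x² + L ∫₀^ℓ ν ‖ξ'‖²`. Hence `x² ≤ 2 x ‖ξ b‖ + L ∫₀^ℓ ν ‖ξ'‖²`, and letting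
`b → ℓ` kills the first term.
-/

theorem two_mul_mul_mul_le_sq_mul_add {t c y m : ℝ} (hm : 0 < m) :
    2 * t * c * y ≤ t ^ 2 * m + c ^ 2 * (m⁻¹ * y ^ 2) := by
  have key : 0 ≤ m⁻¹ * (t * m - c * y) ^ 2 := by positivity
  have expand : m⁻¹ * (t * m - c * y) ^ 2 = t ^ 2 * m + c ^ 2 * (m⁻¹ * y ^ 2) - 2 * t * c * y := by
    field_simp
    ring
  linarith

theorem two_mul_mul_setIntegral_norm_le {E : Type*} [NormedAddCommGroup E]
    {w : ℝ → ℝ} {f : ℝ → E} {a b M t c : ℝ} (hab : a ≤ b) (ht : 0 ≤ t) (hc : 0 ≤ c)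
    (hw : ∀ s ∈ Ioc a b, 0 < w s) (hwM : ∀ s ∈ Ioc a b, w s ≤ M)
    (hf : IntegrableOn (fun s => (w s)⁻¹ * ‖f s‖ ^ 2) (Ioc a b)) :
    2 * t * c * ∫ s in Ioc a b, ‖f s‖ ≤
      t ^ 2 * M * (b - a) + c ^ 2 * ∫ s in Ioc a b, (w s)⁻¹ * ‖f s‖ ^ 2 := by
  have hconst : IntegrableOn (fun _ => t ^ 2 * M) (Ioc a b) :=
    integrableOn_const (by simp)
  calc 2 * t * c * ∫ s in Ioc a b, ‖f s‖
      = ∫ s in Ioc a b, 2 * t * c * ‖f s‖ := (integral_const_mul _ _).symm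
    _ ≤ ∫ s in Ioc a b, (t ^ 2 * M + c ^ 2 * ((w s)⁻¹ * ‖f s‖ ^ 2)) := by
        refine integral_mono_of_nonneg (Eventually.of_forall fun s => by positivity)
          (hconst.add (hf.const_mul _)) ?_
        filter_upwards [ae_restrict_mem measurableSet_Ioc] with s hs
        calc 2 * t * c * ‖f s‖ ≤ t ^ 2 * w s + c ^ 2 * ((w s)⁻¹ * ‖f s‖ ^ 2) :=
              two_mul_mul_mul_le_sq_mul_add (hw s hs)
          _ ≤ t ^ 2 * M + c ^ 2 * ((w s)⁻¹ * ‖f s‖ ^ 2) := by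
              gcongr
              exact hwM s hs
    _ = t ^ 2 * M * (b - a) + c ^ 2 * ∫ s in Ioc a b, (w s)⁻¹ * ‖f s‖ ^ 2 := by
        rw [integral_add hconst (hf.const_mul _), setIntegral_const, integral_const_mul,
          Real.volume_real_Ioc_of_le hab, smul_eq_mul, mul_comm (b - a)]

theorem norm_le_norm_add_setIntegral_norm {V : Type*} [NormedAddCommGroup V] [NormedSpace ℝ V]
    {ξ ξ' : ℝ → V} {a b : ℝ} (hab : a ≤ b) (hξ : ξ b = ξ a + ∫ s in a..b, ξ' s) :
    ‖ξ a‖ ≤ ‖ξ b‖ + ∫ s in Ioc a b, ‖ξ' s‖ := by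
  rw [eq_sub_of_add_eq hξ.symm, intervalIntegral.integral_of_le hab]
  exact (norm_sub_le _ _).trans (add_le_add_right (norm_integral_le_integral_norm _) _)

theorem sq_norm_le_of_eq_add_intervalIntegral {V : Type*} [NormedAddCommGroup V]
    [NormedSpace ℝ V] {μ : ℝ → ℝ} {ξ ξ' : ℝ → V} {a b : ℝ} (hab : a < b)
    (hμpos : ∀ s ∈ Icc a b, 0 < μ s) (hμanti : AntitoneOn μ (Icc a b))
    (hξ : ξ b = ξ a + ∫ s in a..b, ξ' s)
    (hξ' : IntegrableOn (fun s => (μ s)⁻¹ * ‖ξ' s‖ ^ 2) (Ioc a b)) :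
    ‖ξ a‖ ^ 2 ≤
      2 * ‖ξ a‖ * ‖ξ b‖ + (b - a) * μ a * ∫ s in Ioc a b, (μ s)⁻¹ * ‖ξ' s‖ ^ 2 := by
  set x := ‖ξ a‖
  set L := (b - a) * μ a
  have hL : 0 < L := mul_pos (sub_pos.2 hab) (hμpos a (left_mem_Icc.2 hab.le))
  have hFTC := norm_le_norm_add_setIntegral_norm hab.le hξ
  have hAMGM := two_mul_mul_setIntegral_norm_le hab.le (norm_nonneg (ξ a)) hL.le
    (fun s hs => hμpos s (Ioc_subset_Icc_self hs))
    (fun s hs => hμanti (left_mem_Icc.2 hab.le) (Ioc_subset_Icc_self hs) hs.1.le) hξ'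
  refine le_of_mul_le_mul_left ?_ hL
  nlinarith [mul_le_mul_of_nonneg_left hFTC (mul_nonneg hL.le (norm_nonneg (ξ a)))]

theorem sq_norm_le_two_mul_norm_add_mul_setIntegral {V : Type*} [NormedAddCommGroup V]
    [NormedSpace ℝ V] {ℓ τ b : ℝ} {μ : ℝ → ℝ} {ξ ξ' : ℝ → V}
    (hμpos : ∀ s ∈ Ioo 0 ℓ, 0 < μ s) (hμmono : AntitoneOn μ (Ioo 0 ℓ))
    (hFTC : ∀ a b : ℝ, a ∈ Ioo 0 ℓ → b ∈ Ioo 0 ℓ → a ≤ b → ξ b = ξ a + ∫ s in a..b, ξ' s)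
    (hξ'L2 : IntegrableOn (fun s => (μ s)⁻¹ * ‖ξ' s‖ ^ 2) (Ioo 0 ℓ))
    (hτ : τ ∈ Ioo 0 ℓ) (hb : b ∈ Ioo τ ℓ) :
    ‖ξ τ‖ ^ 2 ≤
      2 * ‖ξ τ‖ * ‖ξ b‖ + (ℓ - τ) * μ τ * ∫ s in Ioo 0 ℓ, (μ s)⁻¹ * ‖ξ' s‖ ^ 2 := by
  have hsub : Icc τ b ⊆ Ioo 0 ℓ := Icc_subset_Ioo hτ.1 hb.2
  have hsub' : Ioc τ b ⊆ Ioo 0 ℓ := Ioc_subset_Icc_self.trans hsub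
  have hν : ∀ s ∈ Ioo 0 ℓ, 0 ≤ (μ s)⁻¹ * ‖ξ' s‖ ^ 2 := fun s hs => by
    have := hμpos s hs
    positivity
  have hJ : ∫ s in Ioc τ b, (μ s)⁻¹ * ‖ξ' s‖ ^ 2 ≤ ∫ s in Ioo 0 ℓ, (μ s)⁻¹ * ‖ξ' s‖ ^ 2 :=
    setIntegral_mono_set hξ'L2 ((ae_restrict_mem measurableSet_Ioo).mono hν) hsub'.eventuallyLE
  have hJ₀ : 0 ≤ ∫ s in Ioc τ b, (μ s)⁻¹ * ‖ξ' s‖ ^ 2 :=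
    setIntegral_nonneg measurableSet_Ioc fun s hs => hν s (hsub' hs)
  have hμτ := hμpos τ hτ
  have hL : 0 ≤ (ℓ - τ) * μ τ := mul_nonneg (sub_nonneg.2 hτ.2.le) hμτ.le
  calc ‖ξ τ‖ ^ 2
      ≤ 2 * ‖ξ τ‖ * ‖ξ b‖ + (b - τ) * μ τ * ∫ s in Ioc τ b, (μ s)⁻¹ * ‖ξ' s‖ ^ 2 :=
        sq_norm_le_of_eq_add_intervalIntegral hb.1 (fun s hs => hμpos s (hsub hs))
          (hμmono.mono hsub) (hFTC τ b hτ (hsub (right_mem_Icc.2 hb.1.le)) hb.1.le)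
          (hξ'L2.mono_set hsub')
    _ ≤ 2 * ‖ξ τ‖ * ‖ξ b‖ + (ℓ - τ) * μ τ * ∫ s in Ioo 0 ℓ, (μ s)⁻¹ * ‖ξ' s‖ ^ 2 := by
        gcongr
        exact hb.2.le

theorem stmt5_general
    {V : Type*} [NormedAddCommGroup V] [InnerProductSpace ℝ V]
    (ℓ : ℝ)
    (μ : ℝ → ℝ)
    (hμpos : ∀ s ∈ Ioo 0 ℓ, 0 < μ s)
    (hμmono : AntitoneOn μ (Ioo 0 ℓ))
    (ξ ξ' : ℝ → V)
    (hFTC : ∀ a b : ℝ, a ∈ Ioo 0 ℓ → b ∈ Ioo 0 ℓ → a ≤ b → ξ b = ξ a + ∫ s in a..b, ξ' s)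
    (hξ'L2 : IntegrableOn (fun s => (μ s)⁻¹ * ‖ξ' s‖ ^ 2) (Ioo 0 ℓ))
    (hξlim : Tendsto ξ (nhdsWithin ℓ (Iio ℓ)) (nhds (0 : V))) :
    ∀ τ ∈ Ioo 0 ℓ,
      (μ τ)⁻¹ * ‖ξ τ‖ ^ 2 ≤ (ℓ - τ) * ∫ s in Ioo 0 ℓ, (μ s)⁻¹ * ‖ξ' s‖ ^ 2 := by
  intro τ hτ
  have hμτ := hμpos τ hτ
  set K := (ℓ - τ) * μ τ * ∫ s in Ioo 0 ℓ, (μ s)⁻¹ * ‖ξ' s‖ ^ 2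
  have hlimit : ‖ξ τ‖ ^ 2 ≤ 2 * ‖ξ τ‖ * ‖(0 : V)‖ + K :=
    ge_of_tendsto ((hξlim.norm.const_mul _).add_const _)
      (by filter_upwards [Ioo_mem_nhdsLT hτ.2] with b hb using
        sq_norm_le_two_mul_norm_add_mul_setIntegral hμpos hμmono hFTC hξ'L2 hτ hb)
  rw [norm_zero, mul_zero, zero_add] at hlimit
  calc (μ τ)⁻¹ * ‖ξ τ‖ ^ 2 ≤ (μ τ)⁻¹ * K := by gcongr
    _ = (ℓ - τ) * ∫ s in Ioo 0 ℓ, (μ s)⁻¹ * ‖ξ' s‖ ^ 2 := by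
        simp only [K]
        field_simp

/-- Case `ℓ < ∞`, `Ω = (0,ℓ)`. If `ξ` is locally absolutely continuous
with derivative `ξ' ∈ L²_ν(Ω;V)` (where `ν = 1/μ`) and `ξ(τ) → 0` as `τ → ℓ⁻`, then
for every `τ ∈ Ω`, `ν(τ)‖ξ(τ)‖² ≤ (ℓ − τ) ∫₀^ℓ ν(s)‖ξ'(s)‖² ds`. -/
theorem stmt5
    {V : Type*} [NormedAddCommGroup V] [InnerProductSpace ℝ V] [CompleteSpace V]
    (ℓ : ℝ) (hℓ : 0 < ℓ)
    (μ : ℝ → ℝ)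
    (hμpos : ∀ s ∈ Ioo 0 ℓ, 0 < μ s)
    (hμmono : AntitoneOn μ (Ioo 0 ℓ))
    (hμint : IntegrableOn μ (Ioo 0 ℓ))
    (ξ ξ' : ℝ → V)
    (hξ'loc : ∀ a b : ℝ, a ∈ Ioo 0 ℓ → b ∈ Ioo 0 ℓ → IntegrableOn ξ' (Icc a b))
    (hFTC : ∀ a b : ℝ, a ∈ Ioo 0 ℓ → b ∈ Ioo 0 ℓ → a ≤ b → ξ b = ξ a + ∫ s in a..b, ξ' s)
    (hξ'L2 : IntegrableOn (fun s => (μ s)⁻¹ * ‖ξ' s‖ ^ 2) (Ioo 0 ℓ))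
    (hξlim : Tendsto ξ (nhdsWithin ℓ (Iio ℓ)) (nhds (0 : V))) :
    ∀ τ ∈ Ioo 0 ℓ,
      (μ τ)⁻¹ * ‖ξ τ‖ ^ 2 ≤ (ℓ - τ) * ∫ s in Ioo 0 ℓ, (μ s)⁻¹ * ‖ξ' s‖ ^ 2 :=
  stmt5_general ℓ μ hμpos hμmono ξ ξ' hFTC hξ'L2 hξlim
end

section
/- Let v ∈ V and ξ⋆ ∈ L²_ν(Ω;V), and define ξ(τ) = (∫_τ^ℓ e^{τ−s} μ(s) ds) · v + ∫_τ^ℓ e^{τ−s} ξ⋆(s) ds for τ ∈ Ω. Then ξ ∈ L²_ν(Ω;V) with ‖ξ‖²_{L²_ν} ≤ 2 M(0) ‖v‖²_V + 2‖ξ⋆‖²_{L²_ν}, and moreover lim_{τ→ℓ} ‖ξ(τ)‖_V = 0. -/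
/-!
Write `T f (τ) = ∫_{Ω ∩ (τ,∞)} e^{τ-s} f(s) ds` (`expTail` below), so that
`ξ = T (μ • v) + T ξ⋆` on `Ω` and `‖μ • v‖²_{L²_ν} = M(0) ‖v‖²`; it then suffices that `T` is a
contraction of `L²_ν`. Cauchy–Schwarz with the weight `e^{τ-s} μ(s)`, together with
`∫_τ e^{τ-s} μ(s) ds ≤ μ(τ)` (as `μ` is nonincreasing), gives
`ν(τ) ‖T f(τ)‖² ≤ ∫_τ e^{τ-s} ν(s) ‖f(s)‖² ds`. Integrating in `τ` and swapping the integrals,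
`∫_{-∞}^s e^{τ-s} dτ = 1` yields `‖T f‖_ν ≤ ‖f‖_ν`. The same pointwise bound with
`μ(τ) ≤ μ(τ₀)` shows `T f(τ) → 0`, because the tails of `∫ ν ‖f‖²` vanish.
-/

open MeasureTheory Set Filter

open scoped ENNReal Topology

lemma two_mul_mul_le_sq_mul_add_inv_mul_sq {a : ℝ} (ha : 0 < a) (t x : ℝ) :
    2 * t * x ≤ t ^ 2 * a + a⁻¹ * x ^ 2 := by
  have hsq : 0 ≤ a⁻¹ * (t * a - x) ^ 2 := by positivity
  have hexp : a⁻¹ * (t * a - x) ^ 2 = t ^ 2 * a + a⁻¹ * x ^ 2 - 2 * t * x := by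
    field_simp
    ring
  linarith

lemma sq_norm_integral_le_integral_mul_integral_inv_mul_sq {α E : Type*} [MeasurableSpace α]
    [NormedAddCommGroup E] [NormedSpace ℝ E] {m : Measure α} {f : α → E} {a : α → ℝ}
    (ha : ∀ᵐ x ∂m, 0 < a x) (ha_int : Integrable a m)
    (hfa : Integrable (fun x => (a x)⁻¹ * ‖f x‖ ^ 2) m) :
    ‖∫ x, f x ∂m‖ ^ 2 ≤ (∫ x, a x ∂m) * ∫ x, (a x)⁻¹ * ‖f x‖ ^ 2 ∂m := by
  have hA : 0 ≤ ∫ x, a x ∂m := integral_nonneg_of_ae (ha.mono fun x hx => hx.le)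
  have hC : 0 ≤ ∫ x, (a x)⁻¹ * ‖f x‖ ^ 2 ∂m :=
    integral_nonneg_of_ae (ha.mono fun x hx => by positivity)
  have hN : ‖∫ x, f x ∂m‖ ≤ ∫ x, ‖f x‖ ∂m := norm_integral_le_integral_norm f
  by_cases hf : Integrable (fun x => ‖f x‖) m
  swap
  · rw [integral_undef hf] at hN
    nlinarith [norm_nonneg (∫ x, f x ∂m)]
  -- integrating `2 t ‖f‖ ≤ t² a + a⁻¹ ‖f‖²`: a nonnegative quadratic in `t`, so its
  -- discriminant `4 (∫ ‖f‖)² - 4 (∫ a) (∫ a⁻¹ ‖f‖²)` is `≤ 0`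
  have hquad : ∀ t : ℝ, 0 ≤ (∫ x, a x ∂m) * (t * t) + (-2 * ∫ x, ‖f x‖ ∂m) * t +
      ∫ x, (a x)⁻¹ * ‖f x‖ ^ 2 ∂m := by
    intro t
    have := integral_mono_ae (hf.const_mul (2 * t)) ((ha_int.const_mul (t ^ 2)).add hfa)
      (ha.mono fun x hx => two_mul_mul_le_sq_mul_add_inv_mul_sq hx t ‖f x‖)
    rw [integral_const_mul, integral_add' (ha_int.const_mul _) hfa, integral_const_mul] at this
    nlinarith
  have hdisc := discrim_le_zero hquad
  rw [discrim] at hdisc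
  nlinarith [norm_nonneg (∫ x, f x ∂m)]

lemma integral_Ioi_exp_sub (τ : ℝ) : ∫ s in Ioi τ, Real.exp (τ - s) = 1 := by
  simp_rw [sub_eq_add_neg, Real.exp_add]
  rw [integral_const_mul, integral_exp_neg_Ioi, ← Real.exp_add, add_neg_cancel, Real.exp_zero]

lemma integrableOn_Ioi_exp_sub (τ : ℝ) : IntegrableOn (fun s => Real.exp (τ - s)) (Ioi τ) := by
  by_contra h
  exact one_ne_zero ((integral_Ioi_exp_sub τ).symm.trans (integral_undef h))

lemma lintegral_Iio_exp_sub (s : ℝ) :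
    ∫⁻ τ in Iio s, ENNReal.ofReal (Real.exp (τ - s)) = 1 := by
  have hint : ∫ τ in Iio s, Real.exp (τ - s) = 1 := by
    simp_rw [sub_eq_add_neg, Real.exp_add]
    rw [integral_mul_const, restrict_Iio_eq_restrict_Iic, integral_exp_Iic, ← Real.exp_add,
      add_neg_cancel, Real.exp_zero]
  have hfi : IntegrableOn (fun τ => Real.exp (τ - s)) (Iio s) := by
    by_contra h
    exact one_ne_zero (hint.symm.trans (integral_undef h))
  rw [← ofReal_integral_eq_lintegral_ofReal hfi (ae_of_all _ fun τ => (Real.exp_pos _).le), hint,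
    ENNReal.ofReal_one]

section WeightedSum

variable {E : Type*} [NormedAddCommGroup E] {Ω : Set ℝ} {μ : ℝ → ℝ}

lemma mul_sq_norm_add_le {w : ℝ} (hw : 0 ≤ w) (x y : E) :
    w * ‖x + y‖ ^ 2 ≤ 2 * (w * ‖x‖ ^ 2) + 2 * (w * ‖y‖ ^ 2) := calc
  w * ‖x + y‖ ^ 2 ≤ w * (2 * (‖x‖ ^ 2 + ‖y‖ ^ 2)) := by
    gcongr
    exact (pow_le_pow_left₀ (norm_nonneg _) (norm_add_le x y) 2).trans add_sq_le
  _ = 2 * (w * ‖x‖ ^ 2) + 2 * (w * ‖y‖ ^ 2) := by ring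

lemma integrableOn_inv_mul_sq_norm_add (hΩ : MeasurableSet Ω) (hμ : ∀ s ∈ Ω, 0 ≤ μ s)
    (hμm : AEMeasurable μ (volume.restrict Ω)) {F₁ F₂ : ℝ → E}
    (hF₁m : AEStronglyMeasurable F₁ (volume.restrict Ω))
    (hF₂m : AEStronglyMeasurable F₂ (volume.restrict Ω))
    (hF₁ : IntegrableOn (fun τ => (μ τ)⁻¹ * ‖F₁ τ‖ ^ 2) Ω)
    (hF₂ : IntegrableOn (fun τ => (μ τ)⁻¹ * ‖F₂ τ‖ ^ 2) Ω) :
    IntegrableOn (fun τ => (μ τ)⁻¹ * ‖F₁ τ + F₂ τ‖ ^ 2) Ω := by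
  refine ((hF₁.const_mul 2).add (hF₂.const_mul 2)).mono'
    (hμm.inv.mul ((hF₁m.add hF₂m).norm.aemeasurable.pow_const 2)).aestronglyMeasurable
    (ae_restrict_of_forall_mem hΩ fun τ hτ => ?_)
  have hw := inv_nonneg.2 (hμ τ hτ)
  rw [Real.norm_of_nonneg (by positivity)]
  exact mul_sq_norm_add_le hw _ _

lemma integral_mul_sq_norm_add_le (hΩ : MeasurableSet Ω) (hμ : ∀ s ∈ Ω, 0 ≤ μ s)
    {F₁ F₂ : ℝ → E} (hF₁ : IntegrableOn (fun τ => (μ τ)⁻¹ * ‖F₁ τ‖ ^ 2) Ω)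
    (hF₂ : IntegrableOn (fun τ => (μ τ)⁻¹ * ‖F₂ τ‖ ^ 2) Ω) :
    ∫ τ in Ω, (μ τ)⁻¹ * ‖F₁ τ + F₂ τ‖ ^ 2 ≤
      2 * (∫ τ in Ω, (μ τ)⁻¹ * ‖F₁ τ‖ ^ 2) + 2 * ∫ τ in Ω, (μ τ)⁻¹ * ‖F₂ τ‖ ^ 2 := by
  rw [← integral_const_mul, ← integral_const_mul,
    ← integral_add (hF₁.const_mul 2) (hF₂.const_mul 2)]
  exact integral_mono_of_nonneg
    (ae_restrict_of_forall_mem hΩ fun τ hτ => mul_nonneg (inv_nonneg.2 (hμ τ hτ)) (sq_nonneg _))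
    ((hF₁.const_mul 2).add (hF₂.const_mul 2))
    (ae_restrict_of_forall_mem hΩ fun τ hτ => mul_sq_norm_add_le (inv_nonneg.2 (hμ τ hτ)) _ _)

end WeightedSum

section ExpTail

variable {E : Type*} [NormedAddCommGroup E] [NormedSpace ℝ E] {Ω : Set ℝ} {μ : ℝ → ℝ}

noncomputable def expTail (Ω : Set ℝ) (f : ℝ → E) (τ : ℝ) : E :=
  ∫ s in Ω ∩ Ioi τ, Real.exp (τ - s) • f s

lemma integrableOn_exp_sub_mul_inter_Ioi {h : ℝ → ℝ} (hh : IntegrableOn h Ω) (τ : ℝ) :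
    IntegrableOn (fun s => Real.exp (τ - s) * h s) (Ω ∩ Ioi τ) := by
  refine (hh.mono_set inter_subset_left).bdd_mul (c := 1)
    (by fun_prop : Continuous fun s => Real.exp (τ - s)).aestronglyMeasurable ?_
  refine ae_restrict_of_ae_restrict_of_subset inter_subset_right
    (ae_restrict_of_forall_mem measurableSet_Ioi fun s hs => ?_)
  rw [Real.norm_of_nonneg (Real.exp_pos _).le, Real.exp_le_one_iff, sub_nonpos]
  exact le_of_lt hs

lemma integral_exp_sub_mul_le (hΩ : MeasurableSet Ω) (hμpos : ∀ s ∈ Ω, 0 < μ s)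
    (hμmono : AntitoneOn μ Ω) {τ : ℝ} (hτ : τ ∈ Ω) :
    ∫ s in Ω ∩ Ioi τ, Real.exp (τ - s) * μ s ≤ μ τ := by
  have hS := hΩ.inter (measurableSet_Ioi (a := τ))
  calc ∫ s in Ω ∩ Ioi τ, Real.exp (τ - s) * μ s
      ≤ ∫ s in Ω ∩ Ioi τ, Real.exp (τ - s) * μ τ :=
        integral_mono_of_nonneg
          (ae_restrict_of_forall_mem hS fun s hs =>
            (mul_pos (Real.exp_pos _) (hμpos s hs.1)).le)
          (((integrableOn_Ioi_exp_sub τ).mono_set inter_subset_right).mul_const _)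
          (ae_restrict_of_forall_mem hS fun s hs =>
            mul_le_mul_of_nonneg_left (hμmono hτ hs.1 hs.2.le) (Real.exp_pos _).le)
    _ ≤ ∫ s in Ioi τ, Real.exp (τ - s) * μ τ :=
        setIntegral_mono_set ((integrableOn_Ioi_exp_sub τ).mul_const _)
          (ae_of_all _ fun s => (mul_pos (Real.exp_pos _) (hμpos τ hτ)).le)
          inter_subset_right.eventuallyLE
    _ = μ τ := by rw [integral_mul_const, integral_Ioi_exp_sub, one_mul]

lemma sq_norm_expTail_le (hΩ : MeasurableSet Ω) (hμpos : ∀ s ∈ Ω, 0 < μ s)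
    (hμmono : AntitoneOn μ Ω) (hμint : IntegrableOn μ Ω) {f : ℝ → E}
    (hf : IntegrableOn (fun s => (μ s)⁻¹ * ‖f s‖ ^ 2) Ω) {τ : ℝ} (hτ : τ ∈ Ω) :
    ‖expTail Ω f τ‖ ^ 2 ≤
      μ τ * ∫ s in Ω ∩ Ioi τ, Real.exp (τ - s) * ((μ s)⁻¹ * ‖f s‖ ^ 2) := by
  have hS := hΩ.inter (measurableSet_Ioi (a := τ))
  have hweight : EqOn (fun s => (Real.exp (τ - s) * μ s)⁻¹ * ‖Real.exp (τ - s) • f s‖ ^ 2)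
      (fun s => Real.exp (τ - s) * ((μ s)⁻¹ * ‖f s‖ ^ 2)) (Ω ∩ Ioi τ) := by
    intro s _
    simp only [norm_smul, Real.norm_of_nonneg (Real.exp_pos _).le]
    field_simp
  have hCS := sq_norm_integral_le_integral_mul_integral_inv_mul_sq
    (ae_restrict_of_forall_mem hS fun s hs => mul_pos (Real.exp_pos (τ - s)) (hμpos s hs.1))
    (integrableOn_exp_sub_mul_inter_Ioi hμint τ)
    ((integrableOn_exp_sub_mul_inter_Ioi hf τ).congr_fun hweight.symm hS)
  rw [setIntegral_congr_fun hS hweight] at hCS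
  refine hCS.trans (mul_le_mul_of_nonneg_right (integral_exp_sub_mul_le hΩ hμpos hμmono hτ) ?_)
  exact setIntegral_nonneg hS fun s hs =>
    mul_nonneg (Real.exp_pos _).le (mul_nonneg (inv_nonneg.2 (hμpos s hs.1).le) (sq_nonneg _))

lemma lintegral_lintegral_exp_sub_mul_le {G : ℝ → ℝ≥0∞}
    (hG : AEMeasurable G (volume.restrict Ω)) :
    ∫⁻ τ in Ω, ∫⁻ s in Ω ∩ Ioi τ, ENNReal.ofReal (Real.exp (τ - s)) * G s ≤ ∫⁻ s in Ω, G s := by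
  set K : ℝ → ℝ → ℝ≥0∞ := fun τ s => {p : ℝ × ℝ | p.1 < p.2}.indicator
    (fun p => ENNReal.ofReal (Real.exp (p.1 - p.2)) * G p.2) (τ, s)
  have hK : AEMeasurable (Function.uncurry K) ((volume.restrict Ω).prod (volume.restrict Ω)) :=
    ((by fun_prop : Measurable fun p : ℝ × ℝ =>
      ENNReal.ofReal (Real.exp (p.1 - p.2))).aemeasurable.mul hG.comp_snd).indicator
      (measurableSet_lt measurable_fst measurable_snd)
  have hinner (τ : ℝ) : ∫⁻ s in Ω ∩ Ioi τ, ENNReal.ofReal (Real.exp (τ - s)) * G s =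
      ∫⁻ s in Ω, K τ s := by
    rw [inter_comm, ← Measure.restrict_restrict measurableSet_Ioi,
      ← lintegral_indicator measurableSet_Ioi]
    rfl
  have hswap (s : ℝ) : ∫⁻ τ in Ω, K τ s ≤ G s := calc
    ∫⁻ τ in Ω, K τ s
        ≤ ∫⁻ τ, (Iio s).indicator (fun τ => ENNReal.ofReal (Real.exp (τ - s))) τ * G s :=
          lintegral_mono' Measure.restrict_le_self fun τ => (indicator_mul_left _ _ _).le
    _ = G s := by
      rw [lintegral_mul_const _ ((by fun_prop : Measurable fun τ : ℝ =>
          ENNReal.ofReal (Real.exp (τ - s))).indicator measurableSet_Iio),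
        lintegral_indicator measurableSet_Iio, lintegral_Iio_exp_sub, one_mul]
  calc ∫⁻ τ in Ω, ∫⁻ s in Ω ∩ Ioi τ, ENNReal.ofReal (Real.exp (τ - s)) * G s
      = ∫⁻ τ in Ω, ∫⁻ s in Ω, K τ s := lintegral_congr hinner
    _ = ∫⁻ s in Ω, ∫⁻ τ in Ω, K τ s := lintegral_lintegral_swap hK
    _ ≤ ∫⁻ s in Ω, G s := lintegral_mono hswap

lemma aestronglyMeasurable_expTail {f : ℝ → E}
    (hf : AEStronglyMeasurable f (volume.restrict Ω)) :
    AEStronglyMeasurable (expTail Ω f) (volume.restrict Ω) := by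
  have hF : AEStronglyMeasurable (fun p : ℝ × ℝ => {q : ℝ × ℝ | q.1 < q.2}.indicator
      (fun q => Real.exp (q.1 - q.2) • f q.2) p)
      ((volume.restrict Ω).prod (volume.restrict Ω)) :=
    ((by fun_prop : Continuous fun q : ℝ × ℝ => Real.exp (q.1 - q.2)).aestronglyMeasurable.smul
      hf.comp_snd).indicator (measurableSet_lt measurable_fst measurable_snd)
  refine hF.integral_prod_right'.congr (ae_of_all _ fun τ => ?_)
  rw [expTail, inter_comm, ← Measure.restrict_restrict measurableSet_Ioi,
    ← integral_indicator measurableSet_Ioi]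
  rfl

lemma lintegral_inv_mul_sq_norm_expTail_le (hΩ : MeasurableSet Ω) (hμpos : ∀ s ∈ Ω, 0 < μ s)
    (hμmono : AntitoneOn μ Ω) (hμint : IntegrableOn μ Ω) {f : ℝ → E}
    (hf : IntegrableOn (fun s => (μ s)⁻¹ * ‖f s‖ ^ 2) Ω) :
    ∫⁻ τ in Ω, ENNReal.ofReal ((μ τ)⁻¹ * ‖expTail Ω f τ‖ ^ 2) ≤
      ENNReal.ofReal (∫ s in Ω, (μ s)⁻¹ * ‖f s‖ ^ 2) := by
  set g : ℝ → ℝ := fun s => (μ s)⁻¹ * ‖f s‖ ^ 2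
  have hg : ∀ s ∈ Ω, 0 ≤ g s := fun s hs =>
    mul_nonneg (inv_nonneg.2 (hμpos s hs).le) (sq_nonneg _)
  have hpoint : ∀ τ ∈ Ω, ENNReal.ofReal ((μ τ)⁻¹ * ‖expTail Ω f τ‖ ^ 2) ≤
      ∫⁻ s in Ω ∩ Ioi τ, ENNReal.ofReal (Real.exp (τ - s)) * ENNReal.ofReal (g s) := by
    intro τ hτ
    have hS := hΩ.inter (measurableSet_Ioi (a := τ))
    rw [← lintegral_congr fun s => ENNReal.ofReal_mul (Real.exp_pos (τ - s)).le,
      ← ofReal_integral_eq_lintegral_ofReal (integrableOn_exp_sub_mul_inter_Ioi hf τ)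
        (ae_restrict_of_forall_mem hS fun s hs => mul_nonneg (Real.exp_pos _).le (hg s hs.1))]
    refine ENNReal.ofReal_le_ofReal ?_
    rw [inv_mul_le_iff₀ (hμpos τ hτ)]
    exact sq_norm_expTail_le hΩ hμpos hμmono hμint hf hτ
  calc ∫⁻ τ in Ω, ENNReal.ofReal ((μ τ)⁻¹ * ‖expTail Ω f τ‖ ^ 2)
      ≤ ∫⁻ τ in Ω, ∫⁻ s in Ω ∩ Ioi τ,
          ENNReal.ofReal (Real.exp (τ - s)) * ENNReal.ofReal (g s) :=
        setLIntegral_mono' hΩ hpoint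
    _ ≤ ∫⁻ s in Ω, ENNReal.ofReal (g s) :=
        lintegral_lintegral_exp_sub_mul_le
          (ENNReal.measurable_ofReal.comp_aemeasurable hf.aemeasurable)
    _ = ENNReal.ofReal (∫ s in Ω, g s) :=
        (ofReal_integral_eq_lintegral_ofReal hf (ae_restrict_of_forall_mem hΩ hg)).symm

lemma integrableOn_inv_mul_sq_norm_expTail (hΩ : MeasurableSet Ω) (hμpos : ∀ s ∈ Ω, 0 < μ s)
    (hμmono : AntitoneOn μ Ω) (hμint : IntegrableOn μ Ω) {f : ℝ → E}
    (hfm : AEStronglyMeasurable f (volume.restrict Ω))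
    (hf : IntegrableOn (fun s => (μ s)⁻¹ * ‖f s‖ ^ 2) Ω) :
    IntegrableOn (fun τ => (μ τ)⁻¹ * ‖expTail Ω f τ‖ ^ 2) Ω := by
  refine ⟨((aemeasurable_restrict_of_antitoneOn hΩ hμmono).inv.mul
    ((aestronglyMeasurable_expTail hfm).norm.aemeasurable.pow_const 2)).aestronglyMeasurable, ?_⟩
  rw [hasFiniteIntegral_iff_ofReal (ae_restrict_of_forall_mem hΩ fun τ hτ =>
    mul_nonneg (inv_nonneg.2 (hμpos τ hτ).le) (sq_nonneg _))]
  exact (lintegral_inv_mul_sq_norm_expTail_le hΩ hμpos hμmono hμint hf).trans_lt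
    ENNReal.ofReal_lt_top

lemma integral_inv_mul_sq_norm_expTail_le (hΩ : MeasurableSet Ω) (hμpos : ∀ s ∈ Ω, 0 < μ s)
    (hμmono : AntitoneOn μ Ω) (hμint : IntegrableOn μ Ω) {f : ℝ → E}
    (hfm : AEStronglyMeasurable f (volume.restrict Ω))
    (hf : IntegrableOn (fun s => (μ s)⁻¹ * ‖f s‖ ^ 2) Ω) :
    ∫ τ in Ω, (μ τ)⁻¹ * ‖expTail Ω f τ‖ ^ 2 ≤ ∫ s in Ω, (μ s)⁻¹ * ‖f s‖ ^ 2 := by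
  rw [integral_eq_lintegral_of_nonneg_ae
    (ae_restrict_of_forall_mem hΩ fun τ hτ =>
      mul_nonneg (inv_nonneg.2 (hμpos τ hτ).le) (sq_nonneg _))
    (integrableOn_inv_mul_sq_norm_expTail hΩ hμpos hμmono hμint hfm hf).aestronglyMeasurable]
  exact ENNReal.toReal_le_of_le_ofReal
    (setIntegral_nonneg hΩ fun s hs => mul_nonneg (inv_nonneg.2 (hμpos s hs).le) (sq_nonneg _))
    (lintegral_inv_mul_sq_norm_expTail_le hΩ hμpos hμmono hμint hf)

lemma tendsto_setIntegral_inter_Ioi {g : ℝ → ℝ} (hΩ : MeasurableSet Ω)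
    (hg : IntegrableOn g Ω) :
    Tendsto (fun τ => ∫ s in Ω ∩ Ioi τ, g s) atTop (𝓝 0) := by
  have hempty : ⋂ τ : ℝ, Ω ∩ Ioi τ = ∅ :=
    eq_empty_of_forall_notMem fun s hs => lt_irrefl s (mem_iInter.1 hs s).2
  simpa [hempty] using tendsto_setIntegral_of_antitone (fun τ => hΩ.inter measurableSet_Ioi)
    (fun _ _ h => inter_subset_inter_right _ (Ioi_subset_Ioi h))
    ⟨0, hg.mono_set inter_subset_left⟩

lemma tendsto_norm_expTail (hΩ : MeasurableSet Ω) (hμpos : ∀ s ∈ Ω, 0 < μ s)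
    (hμmono : AntitoneOn μ Ω) (hμint : IntegrableOn μ Ω) {f : ℝ → E}
    (hf : IntegrableOn (fun s => (μ s)⁻¹ * ‖f s‖ ^ 2) Ω) :
    Tendsto (fun τ => ‖expTail Ω f τ‖) (atTop ⊓ 𝓟 Ω) (𝓝 0) := by
  rcases Ω.eq_empty_or_nonempty with rfl | ⟨τ₀, hτ₀⟩
  · simp
  have htail :
      Tendsto (fun τ => √(μ τ₀ * ∫ s in Ω ∩ Ioi τ, (μ s)⁻¹ * ‖f s‖ ^ 2)) atTop (𝓝 0) := by
    simpa using ((tendsto_setIntegral_inter_Ioi hΩ hf).const_mul (μ τ₀)).sqrt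
  refine squeeze_zero' (Eventually.of_forall fun τ => norm_nonneg _) ?_
    (htail.mono_left inf_le_left)
  filter_upwards [mem_inf_of_left (eventually_ge_atTop τ₀),
    mem_inf_of_right (mem_principal_self Ω)] with τ hτ₀τ hτ
  have hS := hΩ.inter (measurableSet_Ioi (a := τ))
  have hg : ∀ s ∈ Ω ∩ Ioi τ, 0 ≤ (μ s)⁻¹ * ‖f s‖ ^ 2 := fun s hs =>
    mul_nonneg (inv_nonneg.2 (hμpos s hs.1).le) (sq_nonneg _)
  refine Real.le_sqrt_of_sq_le ?_
  calc ‖expTail Ω f τ‖ ^ 2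
      ≤ μ τ * ∫ s in Ω ∩ Ioi τ, Real.exp (τ - s) * ((μ s)⁻¹ * ‖f s‖ ^ 2) :=
        sq_norm_expTail_le hΩ hμpos hμmono hμint hf hτ
    _ ≤ μ τ₀ * ∫ s in Ω ∩ Ioi τ, (μ s)⁻¹ * ‖f s‖ ^ 2 := by
        refine mul_le_mul (hμmono hτ₀ hτ hτ₀τ) (integral_mono_of_nonneg
          (ae_restrict_of_forall_mem hS fun s hs => mul_nonneg (Real.exp_pos _).le (hg s hs))
          (hf.mono_set inter_subset_left) (ae_restrict_of_forall_mem hS fun s hs => ?_))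
          (setIntegral_nonneg hS fun s hs => mul_nonneg (Real.exp_pos _).le (hg s hs))
          (hμpos τ₀ hτ₀).le
        refine mul_le_of_le_one_left (hg s hs) ?_
        rw [Real.exp_le_one_iff, sub_nonpos]
        exact hs.2.le

lemma integrableOn_inv_mul_sq_norm_expTail_add (hΩ : MeasurableSet Ω)
    (hμpos : ∀ s ∈ Ω, 0 < μ s) (hμmono : AntitoneOn μ Ω) (hμint : IntegrableOn μ Ω)
    {f₁ f₂ : ℝ → E} (hf₁m : AEStronglyMeasurable f₁ (volume.restrict Ω))
    (hf₂m : AEStronglyMeasurable f₂ (volume.restrict Ω))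
    (hf₁ : IntegrableOn (fun s => (μ s)⁻¹ * ‖f₁ s‖ ^ 2) Ω)
    (hf₂ : IntegrableOn (fun s => (μ s)⁻¹ * ‖f₂ s‖ ^ 2) Ω) :
    IntegrableOn (fun τ => (μ τ)⁻¹ * ‖expTail Ω f₁ τ + expTail Ω f₂ τ‖ ^ 2) Ω :=
  integrableOn_inv_mul_sq_norm_add hΩ (fun s hs => (hμpos s hs).le)
    (aemeasurable_restrict_of_antitoneOn hΩ hμmono) (aestronglyMeasurable_expTail hf₁m)
    (aestronglyMeasurable_expTail hf₂m)
    (integrableOn_inv_mul_sq_norm_expTail hΩ hμpos hμmono hμint hf₁m hf₁)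
    (integrableOn_inv_mul_sq_norm_expTail hΩ hμpos hμmono hμint hf₂m hf₂)

lemma integral_inv_mul_sq_norm_expTail_add_le (hΩ : MeasurableSet Ω)
    (hμpos : ∀ s ∈ Ω, 0 < μ s) (hμmono : AntitoneOn μ Ω) (hμint : IntegrableOn μ Ω)
    {f₁ f₂ : ℝ → E} (hf₁m : AEStronglyMeasurable f₁ (volume.restrict Ω))
    (hf₂m : AEStronglyMeasurable f₂ (volume.restrict Ω))
    (hf₁ : IntegrableOn (fun s => (μ s)⁻¹ * ‖f₁ s‖ ^ 2) Ω)
    (hf₂ : IntegrableOn (fun s => (μ s)⁻¹ * ‖f₂ s‖ ^ 2) Ω) :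
    ∫ τ in Ω, (μ τ)⁻¹ * ‖expTail Ω f₁ τ + expTail Ω f₂ τ‖ ^ 2 ≤
      2 * (∫ s in Ω, (μ s)⁻¹ * ‖f₁ s‖ ^ 2) + 2 * ∫ s in Ω, (μ s)⁻¹ * ‖f₂ s‖ ^ 2 := by
  refine (integral_mul_sq_norm_add_le hΩ (fun s hs => (hμpos s hs).le)
    (integrableOn_inv_mul_sq_norm_expTail hΩ hμpos hμmono hμint hf₁m hf₁)
    (integrableOn_inv_mul_sq_norm_expTail hΩ hμpos hμmono hμint hf₂m hf₂)).trans ?_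
  gcongr 2 * ?_ + 2 * ?_
  · exact integral_inv_mul_sq_norm_expTail_le hΩ hμpos hμmono hμint hf₁m hf₁
  · exact integral_inv_mul_sq_norm_expTail_le hΩ hμpos hμmono hμint hf₂m hf₂

end ExpTail

theorem stmt7_general
    {V : Type*} [NormedAddCommGroup V] [InnerProductSpace ℝ V] [CompleteSpace V]
    (ℓ : EReal)
    (Ω : Set ℝ) (hΩ : Ω = {s : ℝ | 0 < s ∧ (s : EReal) < ℓ})
    (μ : ℝ → ℝ)
    (hμpos : ∀ s ∈ Ω, 0 < μ s)
    (hμmono : AntitoneOn μ Ω)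
    (hμint : IntegrableOn μ Ω)
    (v : V) (ξs : ℝ → V)
    (hξsmeas : AEStronglyMeasurable ξs (volume.restrict Ω))
    (hξsL2 : IntegrableOn (fun s => (μ s)⁻¹ * ‖ξs s‖ ^ 2) Ω)
    (ξ : ℝ → V)
    (hξdef : ∀ τ ∈ Ω, ξ τ =
      (∫ s in Ω ∩ Ioi τ, Real.exp (τ - s) * μ s) • v +
        ∫ s in Ω ∩ Ioi τ, Real.exp (τ - s) • ξs s) :
    IntegrableOn (fun τ => (μ τ)⁻¹ * ‖ξ τ‖ ^ 2) Ω ∧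
      (∫ τ in Ω, (μ τ)⁻¹ * ‖ξ τ‖ ^ 2) ≤
        2 * (∫ σ in Ω, μ σ) * ‖v‖ ^ 2 + 2 * ∫ s in Ω, (μ s)⁻¹ * ‖ξs s‖ ^ 2 ∧
      Tendsto (fun τ => ‖ξ τ‖) (atTop ⊓ Filter.principal Ω) (nhds 0) := by
  have hΩm : MeasurableSet Ω := by rw [hΩ]; measurability
  set f : ℝ → V := fun s => μ s • v
  have hf_eq : EqOn (fun s => (μ s)⁻¹ * ‖f s‖ ^ 2) (fun s => μ s * ‖v‖ ^ 2) Ω := by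
    intro s hs
    simp only [f, norm_smul, Real.norm_of_nonneg (hμpos s hs).le]
    field_simp [(hμpos s hs).ne']
  have hf : IntegrableOn (fun s => (μ s)⁻¹ * ‖f s‖ ^ 2) Ω :=
    IntegrableOn.congr_fun (hμint.mul_const _) hf_eq.symm hΩm
  have hfm : AEStronglyMeasurable f (volume.restrict Ω) :=
    (aemeasurable_restrict_of_antitoneOn hΩm hμmono).aestronglyMeasurable.smul_const v
  have hξ : EqOn ξ (fun τ => expTail Ω f τ + expTail Ω ξs τ) Ω := fun τ hτ => by
    simp only [hξdef τ hτ, expTail, f, smul_smul, integral_smul_const]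
  have hsq : EqOn (fun τ => (μ τ)⁻¹ * ‖ξ τ‖ ^ 2)
      (fun τ => (μ τ)⁻¹ * ‖expTail Ω f τ + expTail Ω ξs τ‖ ^ 2) Ω := fun τ hτ => by
    simp only [hξ hτ]
  refine ⟨(integrableOn_inv_mul_sq_norm_expTail_add hΩm hμpos hμmono hμint hfm hξsmeas hf
    hξsL2).congr_fun hsq.symm hΩm, ?_, ?_⟩
  · refine (setIntegral_congr_fun hΩm hsq).trans_le ((integral_inv_mul_sq_norm_expTail_add_le hΩm
      hμpos hμmono hμint hfm hξsmeas hf hξsL2).trans_eq ?_)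
    rw [setIntegral_congr_fun hΩm hf_eq, integral_mul_const, mul_assoc]
  · refine squeeze_zero' (Eventually.of_forall fun τ => norm_nonneg _) ?_ (by
      simpa using (tendsto_norm_expTail hΩm hμpos hμmono hμint hf).add
        (tendsto_norm_expTail hΩm hμpos hμmono hμint hξsL2))
    filter_upwards [mem_inf_of_right (mem_principal_self Ω)] with τ hτ
    rw [hξ hτ]
    exact norm_add_le _ _

/-- For `v ∈ V` and `ξ⋆ ∈ L²_ν(Ω;V)`, the function
`ξ(τ) = (∫_τ^ℓ e^{τ−s} μ(s) ds) v + ∫_τ^ℓ e^{τ−s} ξ⋆(s) ds` belongs to `L²_ν(Ω;V)`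
with `‖ξ‖²_{L²_ν} ≤ 2 M(0) ‖v‖² + 2 ‖ξ⋆‖²_{L²_ν}`, and `‖ξ(τ)‖ → 0` as `τ → ℓ`. -/
theorem stmt7
    {V : Type*} [NormedAddCommGroup V] [InnerProductSpace ℝ V] [CompleteSpace V]
    (ℓ : EReal) (hℓ : 0 < ℓ)
    (Ω : Set ℝ) (hΩ : Ω = {s : ℝ | 0 < s ∧ (s : EReal) < ℓ})
    (μ : ℝ → ℝ)
    (hμpos : ∀ s ∈ Ω, 0 < μ s)
    (hμmono : AntitoneOn μ Ω)
    (hμint : IntegrableOn μ Ω)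
    (v : V) (ξs : ℝ → V)
    (hξsmeas : AEStronglyMeasurable ξs (volume.restrict Ω))
    (hξsL2 : IntegrableOn (fun s => (μ s)⁻¹ * ‖ξs s‖ ^ 2) Ω)
    (ξ : ℝ → V)
    (hξdef : ∀ τ ∈ Ω, ξ τ =
      (∫ s in Ω ∩ Ioi τ, Real.exp (τ - s) * μ s) • v +
        ∫ s in Ω ∩ Ioi τ, Real.exp (τ - s) • ξs s) :
    IntegrableOn (fun τ => (μ τ)⁻¹ * ‖ξ τ‖ ^ 2) Ω ∧
      (∫ τ in Ω, (μ τ)⁻¹ * ‖ξ τ‖ ^ 2) ≤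
        2 * (∫ σ in Ω, μ σ) * ‖v‖ ^ 2 + 2 * ∫ s in Ω, (μ s)⁻¹ * ‖ξs s‖ ^ 2 ∧
      Tendsto (fun τ => ‖ξ τ‖) (atTop ⊓ Filter.principal Ω) (nhds 0) :=
  stmt7_general ℓ Ω hΩ μ hμpos hμmono hμint v ξs hξsmeas hξsL2 ξ hξdef
end

section
/- Let φ : Ω → V be strongly measurable, and let t ≥ 0 be such that ∫₀^ℓ μ(t+s)‖φ(s)‖_V ds < ∞. Then the map τ ↦ ∫₀^ℓ (−μ'(τ+s))‖φ(s)‖_V ds belongs to L¹((t,∞)), and the identity ∫₀^ℓ μ(t+s) φ(s) ds = −∫_t^ℓ ( ∫₀^ℓ μ'(τ+s) φ(s) ds ) dτ holds in V. -/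
/-! Writing `μ' = -ρ` with `ρ ≥ 0`, the hypotheses give `μ x = ∫_{(x,∞)} ρ` for `x > 0`, hence
`μ (t + s) = ∫_{(t,∞)} ρ (τ + s) dτ`. Tonelli turns the finiteness of `∫ μ (t + s) ‖φ s‖ ds` into
integrability of `(τ, s) ↦ ρ (τ + s) • φ s` on `(t,∞) × Ω`, and Fubini exchanges the two integrals.
For `τ ≥ ℓ` we have `μ τ = 0`, so `ρ (τ + ·) = 0` a.e. and the `τ`-integral may be cut at `ℓ`. -/

open MeasureTheory Set Filter Topology Function

section Fubini

variable {α β E : Type*} [MeasurableSpace α] [MeasurableSpace β] {μ : Measure α} {ν : Measure β}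
  [SFinite μ] [SFinite ν] [NormedAddCommGroup E] [NormedSpace ℝ E]
  {k : α → β → ℝ} {M : β → ℝ} {φ : β → E}

theorem integrable_prod_smul_of_integral_eq (hk_nonneg : ∀ x y, 0 ≤ k x y)
    (hk : AEStronglyMeasurable (uncurry k) (μ.prod ν)) (hφ : AEStronglyMeasurable φ ν)
    (hkM : ∀ᵐ y ∂ν, Integrable (k · y) μ ∧ ∫ x, k x y ∂μ = M y)
    (hM : Integrable (fun y => M y * ‖φ y‖) ν) :
    Integrable (uncurry fun x y => k x y • φ y) (μ.prod ν) := by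
  have hmeas : AEStronglyMeasurable (uncurry fun x y => k x y • φ y) (μ.prod ν) :=
    hk.smul (hφ.comp_quasiMeasurePreserving Measure.quasiMeasurePreserving_snd)
  refine (integrable_prod_iff' hmeas).2 ⟨hkM.mono fun y hy => hy.1.smul_const (φ y), hM.congr ?_⟩
  filter_upwards [hkM] with y hy
  simp only [uncurry_apply_pair, norm_smul, Real.norm_of_nonneg (hk_nonneg _ _), integral_mul_const,
    hy.2]

theorem integral_smul_eq_integral_integral_of_integral_eq [CompleteSpace E]
    (hk_nonneg : ∀ x y, 0 ≤ k x y)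
    (hk : AEStronglyMeasurable (uncurry k) (μ.prod ν)) (hφ : AEStronglyMeasurable φ ν)
    (hkM : ∀ᵐ y ∂ν, Integrable (k · y) μ ∧ ∫ x, k x y ∂μ = M y)
    (hM : Integrable (fun y => M y * ‖φ y‖) ν) :
    Integrable (fun x => ∫ y, k x y * ‖φ y‖ ∂ν) μ ∧
      (∀ᵐ x ∂μ, Integrable (fun y => k x y • φ y) ν) ∧
      ∫ y, M y • φ y ∂ν = ∫ x, ∫ y, k x y • φ y ∂ν ∂μ := by
  have hint := integrable_prod_smul_of_integral_eq hk_nonneg hk hφ hkM hM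
  refine ⟨?_, hint.prod_right_ae, ?_⟩
  · simpa only [uncurry_apply_pair, norm_smul, Real.norm_of_nonneg (hk_nonneg _ _)]
      using hint.integral_norm_prod_left
  · rw [integral_integral_swap hint]
    refine integral_congr_ae (hkM.mono fun y hy => ?_)
    simp only [integral_smul_const, hy.2]

end Fubini

section HalfLine

variable {E : Type*} [NormedAddCommGroup E]

theorem aestronglyMeasurable_restrict_Ioi_of_integrableOn_Icc {f : ℝ → E} {c : ℝ}
    (hf : ∀ a b, c < a → IntegrableOn f (Icc a b)) :
    AEStronglyMeasurable f (volume.restrict (Ioi c)) := by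
  refine LocallyIntegrableOn.aestronglyMeasurable
    ((locallyIntegrableOn_iff isOpen_Ioi.isLocallyClosed).2 fun K hK hKc => ?_)
  rcases K.eq_empty_or_nonempty with rfl | hne
  · exact integrableOn_empty
  exact (hf _ (sSup K) (hK (hKc.sInf_mem hne))).mono_set
    fun x hx => ⟨csInf_le hKc.bddBelow hx, le_csSup hKc.bddAbove hx⟩

theorem integrableOn_Ioi_comp_add_right_iff {f : ℝ → E} (a c : ℝ) :
    IntegrableOn (fun x => f (x + c)) (Ioi a) ↔ IntegrableOn f (Ioi (a + c)) := by
  simpa [preimage_add_const_Ioi, comp_def] using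
    (measurePreserving_add_right volume c).integrableOn_comp_preimage
      (measurableEmbedding_addRight c) (f := f) (s := Ioi (a + c))

theorem setIntegral_Ioi_comp_add_right [NormedSpace ℝ E] (f : ℝ → E) (a c : ℝ) :
    ∫ x in Ioi a, f (x + c) = ∫ x in Ioi (a + c), f x := by
  simpa [preimage_add_const_Ioi] using
    (measurePreserving_add_right volume c).setIntegral_preimage_emb
      (measurableEmbedding_addRight c) f (Ioi (a + c))

theorem ae_restrict_Ioi_comp_add_left {p : ℝ → Prop} {a b τ : ℝ} (hab : a ≤ τ + b)
    (h : ∀ᵐ x ∂volume.restrict (Ioi a), p x) : ∀ᵐ s ∂volume.restrict (Ioi b), p (τ + s) := by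
  rw [ae_restrict_iff' measurableSet_Ioi] at h ⊢
  filter_upwards [(measurePreserving_add_left volume τ).quasiMeasurePreserving.ae h] with s hs hsb
  exact hs (by rw [mem_Ioi] at hsb ⊢; linarith)

theorem AntitoneOn.tendsto_atTop_zero_of_integrableOn {f : ℝ → ℝ} {a : ℝ}
    (hf : AntitoneOn f (Ioi a)) (hf_nonneg : ∀ x > a, 0 ≤ f x) (hint : IntegrableOn f (Ioi a)) :
    Tendsto f atTop (𝓝 0) := by
  have htail : Tendsto (fun x => ∫ y in Ioi (x - 1), f y) atTop (𝓝 0) :=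
    tendsto_integral_Ioi_zero (tendsto_atTop_add_const_right _ _ tendsto_id)
  refine tendsto_of_tendsto_of_tendsto_of_le_of_le' tendsto_const_nhds htail ?_ ?_
  · filter_upwards [eventually_gt_atTop a] with x hx using hf_nonneg x hx
  filter_upwards [eventually_gt_atTop (a + 1)] with x hx
  have hsub : Ioc (x - 1) x ⊆ Ioi a := fun y hy => mem_Ioi.2 (by linarith [hy.1])
  calc f x = ∫ _ in Ioc (x - 1) x, f x := by simp
    _ ≤ ∫ y in Ioc (x - 1) x, f y :=
      setIntegral_mono_on (integrableOn_const (by simp)) (hint.mono_set hsub) measurableSet_Ioc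
        fun y hy => hf (hsub hy) (mem_Ioi.2 (by linarith)) hy.2
    _ ≤ ∫ y in Ioi (x - 1), f y :=
      setIntegral_mono_set (hint.mono_set (Ioi_subset_Ioi (by linarith)))
        ((ae_restrict_iff' measurableSet_Ioi).2 (.of_forall fun y hy => hf_nonneg y
          (by rw [mem_Ioi] at hy; linarith)))
        Ioc_subset_Ioi_self.eventuallyLE

theorem integrableOn_Ioi_and_integral_eq_of_tendsto {f ρ : ℝ → ℝ} {a : ℝ} (hρ : ∀ x, 0 ≤ ρ x)
    (hint : ∀ b, IntegrableOn ρ (Ioc a b)) (hFTC : ∀ b, a ≤ b → ∫ x in a..b, ρ x = f a - f b)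
    (hf : Tendsto f atTop (𝓝 0)) :
    IntegrableOn ρ (Ioi a) ∧ ∫ x in Ioi a, ρ x = f a := by
  have hlim : Tendsto (fun b => ∫ x in a..b, ρ x) atTop (𝓝 (f a)) := by
    simpa using (tendsto_const_nhds (x := f a)).sub hf |>.congr'
      ((eventually_ge_atTop a).mono fun b hb => (hFTC b hb).symm)
  have hIoi : IntegrableOn ρ (Ioi a) :=
    integrableOn_Ioi_of_intervalIntegral_norm_tendsto (f a) a hint tendsto_id
      (by simpa only [Real.norm_of_nonneg (hρ _)] using hlim)
  exact ⟨hIoi, tendsto_nhds_unique (intervalIntegral_tendsto_integral_Ioi a hIoi tendsto_id) hlim⟩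

end HalfLine

theorem exists_measurable_nonneg_ae_eq_neg {α : Type*} [MeasurableSpace α] {μ : Measure α}
    {g : α → ℝ} (hg : AEMeasurable g μ) (hle : ∀ᵐ x ∂μ, g x ≤ 0) :
    ∃ ρ : α → ℝ, Measurable ρ ∧ (∀ x, 0 ≤ ρ x) ∧ g =ᵐ[μ] -ρ := by
  refine ⟨fun x => max (-hg.mk g x) 0, hg.measurable_mk.neg.max measurable_const,
    fun x => le_max_right _ _, ?_⟩
  filter_upwards [hg.ae_eq_mk, hle] with x hx hx'
  simp [← hx, hx']

theorem integrableOn_Ioi_and_integral_eq_of_ae_eq_neg {μ μ' ρ : ℝ → ℝ} {x : ℝ} (hx : 0 < x)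
    (hρ : ∀ y, 0 ≤ ρ y) (hμ'ρ : μ' =ᵐ[volume.restrict (Ioi 0)] -ρ)
    (hμ'loc : ∀ a b : ℝ, 0 < a → IntegrableOn μ' (Icc a b))
    (hFTC : ∀ a b : ℝ, 0 < a → a ≤ b → μ b = μ a + ∫ y in a..b, μ' y)
    (hμ : Tendsto μ atTop (𝓝 0)) :
    IntegrableOn ρ (Ioi x) ∧ ∫ y in Ioi x, ρ y = μ x := by
  have hae : ∀ b, ρ =ᵐ[volume.restrict (Ioc x b)] fun y => -μ' y := fun b => by
    filter_upwards [ae_restrict_of_ae_restrict_of_subset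
      (Ioc_subset_Ioi_self.trans (Ioi_subset_Ioi hx.le)) hμ'ρ] with y hy
    simp [hy]
  refine integrableOn_Ioi_and_integral_eq_of_tendsto hρ
    (fun b => ((hμ'loc x b hx).mono_set Ioc_subset_Icc_self).neg.congr (hae b).symm)
    (fun b hb => ?_) hμ
  rw [intervalIntegral.integral_of_le hb, integral_congr_ae (hae b), integral_neg,
    ← intervalIntegral.integral_of_le hb, hFTC x b hx hb]
  ring

theorem exists_nonneg_density_of_antitoneOn {μ μ' : ℝ → ℝ} (hμ_nonneg : ∀ x > 0, 0 ≤ μ x)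
    (hμmono : AntitoneOn μ (Ioi 0)) (hμint : IntegrableOn μ (Ioi 0))
    (hμ'loc : ∀ a b : ℝ, 0 < a → IntegrableOn μ' (Icc a b))
    (hμ'le : ∀ᵐ s ∂(volume.restrict (Ioi 0)), μ' s ≤ 0)
    (hFTC : ∀ a b : ℝ, 0 < a → a ≤ b → μ b = μ a + ∫ x in a..b, μ' x) :
    ∃ ρ : ℝ → ℝ, Measurable ρ ∧ (∀ x, 0 ≤ ρ x) ∧ μ' =ᵐ[volume.restrict (Ioi 0)] -ρ ∧
      ∀ x > 0, IntegrableOn ρ (Ioi x) ∧ ∫ y in Ioi x, ρ y = μ x := by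
  obtain ⟨ρ, hρmeas, hρ, hμ'ρ⟩ := exists_measurable_nonneg_ae_eq_neg
    (aestronglyMeasurable_restrict_Ioi_of_integrableOn_Icc hμ'loc).aemeasurable hμ'le
  exact ⟨ρ, hρmeas, hρ, hμ'ρ, fun x hx => integrableOn_Ioi_and_integral_eq_of_ae_eq_neg hx hρ hμ'ρ
    hμ'loc hFTC (hμmono.tendsto_atTop_zero_of_integrableOn hμ_nonneg hμint)⟩

theorem ae_restrict_Ioi_comp_add_eq_zero {ρ : ℝ → ℝ} {τ : ℝ} (hρ : ∀ x, 0 ≤ ρ x)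
    (hint : IntegrableOn ρ (Ioi τ)) (h0 : ∫ x in Ioi τ, ρ x = 0) :
    ∀ᵐ s ∂volume.restrict (Ioi 0), ρ (τ + s) = 0 :=
  ae_restrict_Ioi_comp_add_left (add_zero τ).ge
    ((setIntegral_eq_zero_iff_of_nonneg_ae (.of_forall hρ) hint).1 h0)

theorem integral_smul_eq_integral_Ioi_integral_comp_add {V : Type*} [NormedAddCommGroup V]
    [NormedSpace ℝ V] [CompleteSpace V] {μ ρ : ℝ → ℝ} {φ : ℝ → V} {Ω : Set ℝ} {t : ℝ}
    (ht : 0 ≤ t) (hΩ : MeasurableSet Ω) (hΩpos : Ω ⊆ Ioi 0) (hρmeas : Measurable ρ)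
    (hρ : ∀ x, 0 ≤ ρ x) (hρμ : ∀ x > 0, IntegrableOn ρ (Ioi x) ∧ ∫ y in Ioi x, ρ y = μ x)
    (hφ : AEStronglyMeasurable φ (volume.restrict Ω))
    (hφint : IntegrableOn (fun s => μ (t + s) * ‖φ s‖) Ω) :
    IntegrableOn (fun τ => ∫ s in Ω, ρ (τ + s) * ‖φ s‖) (Ioi t) ∧
      (∀ᵐ τ ∂volume.restrict (Ioi t), IntegrableOn (fun s => ρ (τ + s) • φ s) Ω) ∧
      ∫ s in Ω, μ (t + s) • φ s = ∫ τ in Ioi t, ∫ s in Ω, ρ (τ + s) • φ s := by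
  have hkernel : ∀ᵐ s ∂volume.restrict Ω, IntegrableOn (fun τ => ρ (τ + s)) (Ioi t) ∧
      ∫ τ in Ioi t, ρ (τ + s) = μ (t + s) := by
    filter_upwards [ae_restrict_mem hΩ] with s hs
    have hts : 0 < t + s := by linarith [mem_Ioi.1 (hΩpos hs)]
    exact ⟨(integrableOn_Ioi_comp_add_right_iff t s).2 (hρμ _ hts).1,
      (setIntegral_Ioi_comp_add_right ρ t s).trans (hρμ _ hts).2⟩
  exact integral_smul_eq_integral_integral_of_integral_eq (k := fun τ s => ρ (τ + s))
    (fun _ _ => hρ _) (hρmeas.comp measurable_add).aestronglyMeasurable hφ hkernel hφint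

theorem stmt9_general
    {V : Type*} [NormedAddCommGroup V] [InnerProductSpace ℝ V] [CompleteSpace V]
    (ℓ : EReal)
    (Ω : Set ℝ) (hΩ : Ω = {s : ℝ | 0 < s ∧ (s : EReal) < ℓ})
    (μ μ' : ℝ → ℝ)
    (hμpos : ∀ s ∈ Ω, 0 < μ s)
    (hμzero : ∀ s : ℝ, 0 < s → s ∉ Ω → μ s = 0)
    (hμmono : AntitoneOn μ (Ioi 0))
    (hμint : IntegrableOn μ (Ioi 0))
    (hμ'loc : ∀ a b : ℝ, 0 < a → IntegrableOn μ' (Icc a b))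
    (hμ'le : ∀ᵐ s ∂(volume.restrict (Ioi 0)), μ' s ≤ 0)
    (hFTC : ∀ a b : ℝ, 0 < a → a ≤ b → μ b = μ a + ∫ x in a..b, μ' x)
    (φ : ℝ → V)
    (hφmeas : AEStronglyMeasurable φ (volume.restrict Ω))
    (t : ℝ) (ht : 0 ≤ t)
    (hφint : IntegrableOn (fun s => μ (t + s) * ‖φ s‖) Ω) :
    IntegrableOn (fun τ => ∫ s in Ω, -μ' (τ + s) * ‖φ s‖) (Ioi t) ∧
      (∀ᵐ τ ∂(volume.restrict (Ioi t)), IntegrableOn (fun s => μ' (τ + s) • φ s) Ω) ∧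
      (∫ s in Ω, μ (t + s) • φ s) =
        -∫ τ in {τ : ℝ | t < τ ∧ (τ : EReal) < ℓ}, ∫ s in Ω, μ' (τ + s) • φ s := by
  have hΩpos : Ω ⊆ Ioi 0 := hΩ ▸ fun s hs => hs.1
  have hΩmeas : MeasurableSet Ω :=
    hΩ ▸ measurableSet_Ioi.inter (measurable_coe_real_ereal measurableSet_Iio)
  have hμ_nonneg : ∀ x > 0, 0 ≤ μ x := fun x hx => by
    by_cases h : x ∈ Ω
    exacts [(hμpos x h).le, (hμzero x hx h).ge]
  obtain ⟨ρ, hρmeas, hρ, hμ'ρ, hρμ⟩ :=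
    exists_nonneg_density_of_antitoneOn hμ_nonneg hμmono hμint hμ'loc hμ'le hFTC
  obtain ⟨hnorm, hae, hswap⟩ := integral_smul_eq_integral_Ioi_integral_comp_add ht hΩmeas hΩpos
    hρmeas hρ hρμ hφmeas hφint
  have hsign : ∀ τ > t, (fun s => μ' (τ + s)) =ᵐ[volume.restrict Ω] fun s => -ρ (τ + s) :=
    fun τ hτ => ae_restrict_of_ae_restrict_of_subset hΩpos
      (ae_restrict_Ioi_comp_add_left (by linarith) hμ'ρ)
  have hvanish : ∀ τ ∈ Ioi t \ {τ : ℝ | t < τ ∧ (τ : EReal) < ℓ},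
      ∫ s in Ω, ρ (τ + s) • φ s = 0 := by
    rintro τ ⟨hτ, hτℓ⟩
    have hτpos : 0 < τ := ht.trans_lt hτ
    have hμτ : μ τ = 0 := hμzero τ hτpos (by rw [hΩ]; exact fun h => hτℓ ⟨hτ, h.2⟩)
    have hρτ := ae_restrict_Ioi_comp_add_eq_zero hρ (hρμ τ hτpos).1 ((hρμ τ hτpos).2.trans hμτ)
    exact integral_eq_zero_of_ae
      ((ae_restrict_of_ae_restrict_of_subset hΩpos hρτ).mono fun s hs => by simp [hs])
  refine ⟨hnorm.congr ?_, ?_, ?_⟩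
  · filter_upwards [ae_restrict_mem measurableSet_Ioi] with τ hτ
    exact integral_congr_ae ((hsign τ hτ).mono fun s hs => by simp [hs])
  · filter_upwards [hae, ae_restrict_mem measurableSet_Ioi] with τ hint hτ
    exact hint.neg.congr ((hsign τ hτ).mono fun s hs => by simp [hs])
  rw [hswap, setIntegral_eq_of_subset_of_forall_sdiff_eq_zero measurableSet_Ioi
    (fun τ hτ => hτ.1) hvanish, ← integral_neg]
  refine setIntegral_congr_fun (measurableSet_Ioi.inter
    (measurable_coe_real_ereal measurableSet_Iio)) fun τ hτ => ?_
  rw [← integral_neg]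
  exact integral_congr_ae ((hsign τ hτ.1).mono fun s hs => by simp [hs])

/-- Lemma `CRUCIAL`. Let `μ` be extended by `0` outside `Ω`, with
a.e. derivative `μ' ≤ 0` (FTC form). If `φ : Ω → V` is strongly measurable and `t ≥ 0`
satisfies `∫₀^ℓ μ(t+s)‖φ(s)‖ ds < ∞`, then `τ ↦ ∫₀^ℓ (−μ'(τ+s))‖φ(s)‖ ds ∈ L¹((t,∞))`
and `∫₀^ℓ μ(t+s) φ(s) ds = −∫_t^ℓ (∫₀^ℓ μ'(τ+s) φ(s) ds) dτ` in `V`. -/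
theorem stmt9
    {V : Type*} [NormedAddCommGroup V] [InnerProductSpace ℝ V] [CompleteSpace V]
    (ℓ : EReal) (hℓ : 0 < ℓ)
    (Ω : Set ℝ) (hΩ : Ω = {s : ℝ | 0 < s ∧ (s : EReal) < ℓ})
    (μ μ' : ℝ → ℝ)
    (hμpos : ∀ s ∈ Ω, 0 < μ s)
    (hμzero : ∀ s : ℝ, 0 < s → s ∉ Ω → μ s = 0)
    (hμmono : AntitoneOn μ (Ioi 0))
    (hμint : IntegrableOn μ (Ioi 0))
    (hμ'loc : ∀ a b : ℝ, 0 < a → IntegrableOn μ' (Icc a b))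
    (hμ'le : ∀ᵐ s ∂(volume.restrict (Ioi 0)), μ' s ≤ 0)
    (hFTC : ∀ a b : ℝ, 0 < a → a ≤ b → μ b = μ a + ∫ x in a..b, μ' x)
    (φ : ℝ → V)
    (hφmeas : AEStronglyMeasurable φ (volume.restrict Ω))
    (t : ℝ) (ht : 0 ≤ t)
    (hφint : IntegrableOn (fun s => μ (t + s) * ‖φ s‖) Ω) :
    IntegrableOn (fun τ => ∫ s in Ω, -μ' (τ + s) * ‖φ s‖) (Ioi t) ∧
      (∀ᵐ τ ∂(volume.restrict (Ioi t)), IntegrableOn (fun s => μ' (τ + s) • φ s) Ω) ∧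
      (∫ s in Ω, μ (t + s) • φ s) =
        -∫ τ in {τ : ℝ | t < τ ∧ (τ : EReal) < ℓ}, ∫ s in Ω, μ' (τ + s) • φ s :=
  stmt9_general ℓ Ω hΩ μ μ' hμpos hμzero hμmono hμint hμ'loc hμ'le hFTC φ hφmeas t ht hφint
end

section
/- Let η ∈ L²_μ(Ω;V), and define Πη(τ) = −∫₀^ℓ μ'(τ+s) η(s) ds for τ ∈ Ω. Then Πη ∈ L²_ν(Ω;V) and ‖Πη‖_{L²_ν(Ω;V)} ≤ ‖η‖_{L²_μ(Ω;V)}, i.e. ∫₀^ℓ (1/μ(τ)) ‖∫₀^ℓ μ'(τ+s) η(s) ds‖²_V dτ ≤ ∫₀^ℓ μ(s) ‖η(s)‖²_V ds. -/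
/-!
Write `w = -μ' ≥ 0`. The fundamental theorem of calculus gives the tail bound
`∫_σ^∞ w ≤ μ(σ)`. By Cauchy–Schwarz against the weight `w(τ + ·)`,
`‖Πη(τ)‖² ≤ μ(τ) · ∫ w(τ + s) ‖η(s)‖² ds`; dividing by `μ(τ)`, integrating in `τ` and
exchanging the integrals (Tonelli) leaves `∫ (∫ w(τ + s) dτ) ‖η(s)‖² ds`, which the tail bound
at `σ = s` controls by `∫ μ(s) ‖η(s)‖² ds`.
-/

open MeasureTheory Set Filter
open scoped ENNReal

namespace ENNReal

theorem lintegral_mul_sq_le {α : Type*} [MeasurableSpace α] {ν : Measure α} {w f : α → ℝ≥0∞}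
    (hw : AEMeasurable w ν) (hf : AEMeasurable f ν) :
    (∫⁻ a, w a * f a ∂ν) ^ 2 ≤ (∫⁻ a, w a ∂ν) * ∫⁻ a, w a * f a ^ 2 ∂ν := by
  have hsplit : ∀ a, w a * f a = w a ^ (1 / 2 : ℝ) * (w a * f a ^ 2) ^ (1 / 2 : ℝ) := fun a => by
    rw [mul_rpow_of_nonneg _ _ (by norm_num), ← mul_assoc, ← rpow_add_of_nonneg _ _ (by norm_num)
      (by norm_num), ← rpow_natCast, ← rpow_mul]
    norm_num
  have hsq : ∀ x : ℝ≥0∞, (x ^ (1 / 2 : ℝ)) ^ 2 = x := fun x => by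
    rw [← rpow_natCast, ← rpow_mul]
    norm_num
  calc (∫⁻ a, w a * f a ∂ν) ^ 2
      ≤ ((∫⁻ a, w a ∂ν) ^ (1 / 2 : ℝ) * (∫⁻ a, w a * f a ^ 2 ∂ν) ^ (1 / 2 : ℝ)) ^ 2 := by
        simp_rw [hsplit]
        gcongr
        exact lintegral_mul_norm_pow_le hw (hw.mul (hf.pow_const 2)) (by norm_num) (by norm_num)
          (by norm_num)
    _ = (∫⁻ a, w a ∂ν) * ∫⁻ a, w a * f a ^ 2 ∂ν := by rw [mul_pow, hsq, hsq]

theorem ofReal_inv_mul_le_of_ofReal_le_mul {m x : ℝ} {B : ℝ≥0∞} (hx : 0 ≤ x)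
    (h : ENNReal.ofReal x ≤ ENNReal.ofReal m * B) : ENNReal.ofReal (m⁻¹ * x) ≤ B := by
  rcases le_or_gt m 0 with hm | hm
  · rw [ofReal_of_nonpos (mul_nonpos_of_nonpos_of_nonneg (inv_nonpos.2 hm) hx)]
    exact zero_le
  calc ENNReal.ofReal (m⁻¹ * x) = ENNReal.ofReal m⁻¹ * ENNReal.ofReal x :=
        ofReal_mul (inv_nonneg.2 hm.le)
    _ ≤ ENNReal.ofReal m⁻¹ * (ENNReal.ofReal m * B) := by gcongr
    _ = B := by
        rw [← mul_assoc, ← ofReal_mul (inv_nonneg.2 hm.le), inv_mul_cancel₀ hm.ne', ofReal_one,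
          one_mul]

end ENNReal

theorem integrable_and_integral_le_of_lintegral_ofReal_le {α : Type*} [MeasurableSpace α]
    {ν : Measure α} {f g : α → ℝ} (hf : AEStronglyMeasurable f ν) (hf0 : 0 ≤ᵐ[ν] f)
    (hg : Integrable g ν) (hg0 : 0 ≤ᵐ[ν] g)
    (h : ∫⁻ a, ENNReal.ofReal (f a) ∂ν ≤ ∫⁻ a, ENNReal.ofReal (g a) ∂ν) :
    Integrable f ν ∧ ∫ a, f a ∂ν ≤ ∫ a, g a ∂ν := by
  rw [← ofReal_integral_eq_lintegral_ofReal hg hg0] at h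
  refine ⟨⟨hf, ?_⟩, ?_⟩
  · rw [hasFiniteIntegral_iff_ofReal hf0]
    exact h.trans_lt ENNReal.ofReal_lt_top
  · rw [integral_eq_lintegral_of_nonneg_ae hf0 hf]
    exact ENNReal.toReal_le_of_le_ofReal (integral_nonneg_of_ae hg0) h

theorem lintegral_Ioi_enorm_le_of_eq_add_intervalIntegral {F f : ℝ → ℝ}
    (hint : ∀ a b, 0 < a → IntegrableOn f (Icc a b)) (hf : ∀ᵐ x ∂volume.restrict (Ioi 0), f x ≤ 0)
    (hF : ∀ a b, 0 < a → a ≤ b → F b = F a + ∫ x in a..b, f x) (hF0 : ∀ b, 0 < b → 0 ≤ F b)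
    {a : ℝ} (ha : 0 < a) : ∫⁻ x in Ioi a, ‖f x‖ₑ ≤ ENNReal.ofReal (F a) := by
  have hIoi : Ioi a = ⋃ n : ℕ, Ioc a (a + n) := by
    refine (iUnion_Ioc_eq_Ioi_self_iff.2 fun x _ => ?_).symm
    obtain ⟨n, hn⟩ := exists_nat_ge (x - a)
    exact ⟨n, by linarith⟩
  have hmono : Monotone fun n : ℕ => Ioc a (a + n) := fun n m hnm =>
    Ioc_subset_Ioc_right (by gcongr)
  rw [hIoi, setLIntegral_iUnion_of_directed _ hmono.directed_le]
  refine iSup_le fun n => ?_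
  have hab : a ≤ a + n := le_add_of_nonneg_right n.cast_nonneg
  have hf' : ∀ᵐ x ∂volume.restrict (Ioc a (a + n)), ‖f x‖ = -f x := by
    filter_upwards [ae_restrict_of_ae_restrict_of_subset (Ioc_subset_Ioi_self.trans
      (Ioi_subset_Ioi ha.le)) hf] with x hx
    exact Real.norm_of_nonpos hx
  rw [← ofReal_integral_norm_eq_lintegral_enorm ((hint _ _ ha).mono_set Ioc_subset_Icc_self),
    integral_congr_ae hf', integral_neg, ← intervalIntegral.integral_of_le hab]
  exact ENNReal.ofReal_le_ofReal (by linarith [hF _ _ ha hab, hF0 _ (ha.trans_le hab)])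

theorem ae_restrict_Ioi_comp_const_add {p : ℝ → Prop} {a : ℝ}
    (h : ∀ᵐ x ∂volume.restrict (Ioi a), p x) (τ : ℝ) :
    ∀ᵐ s ∂volume.restrict (Ioi (a - τ)), p (τ + s) := by
  rw [← preimage_const_add_Ioi]
  exact ((measurePreserving_add_left volume τ).restrict_preimage
    measurableSet_Ioi).quasiMeasurePreserving.ae h

theorem setLIntegral_comp_const_add_le {S : Set ℝ} (hS : S ⊆ Ioi 0) (f : ℝ → ℝ≥0∞) (σ : ℝ) :
    ∫⁻ t in S, f (σ + t) ≤ ∫⁻ x in Ioi σ, f x :=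
  calc ∫⁻ t in S, f (σ + t) ≤ ∫⁻ t in (σ + ·) ⁻¹' Ioi σ, f (σ + t) :=
        lintegral_mono_set (by rwa [preimage_const_add_Ioi, sub_self])
    _ = ∫⁻ x in Ioi σ, f x := (measurePreserving_add_left volume σ).setLIntegral_comp_preimage_emb
        (measurableEmbedding_addLeft σ) f _

theorem aemeasurable_restrict_Ioi_of_integrableOn_Icc {f : ℝ → ℝ} {c : ℝ}
    (hf : ∀ a b, c < a → IntegrableOn f (Icc a b)) : AEMeasurable f (volume.restrict (Ioi c)) :=
  (LocallyIntegrableOn.aestronglyMeasurable fun x (hx : c < x) =>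
    ⟨Icc ((c + x) / 2) (x + 1),
      mem_nhdsWithin_of_mem_nhds (Icc_mem_nhds (by linarith) (by linarith)),
      hf _ _ (by linarith)⟩).aemeasurable

theorem setLIntegral_enorm_comp_const_add_le {S : Set ℝ} (hS : S ⊆ Ioi 0) {F f g : ℝ → ℝ}
    (hfg : f =ᵐ[volume.restrict (Ioi 0)] g) (hint : ∀ a b, 0 < a → IntegrableOn f (Icc a b))
    (hf : ∀ᵐ x ∂volume.restrict (Ioi 0), f x ≤ 0)
    (hF : ∀ a b, 0 < a → a ≤ b → F b = F a + ∫ x in a..b, f x) (hF0 : ∀ b, 0 < b → 0 ≤ F b)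
    {σ : ℝ} (hσ : 0 < σ) : ∫⁻ t in S, ‖g (σ + t)‖ₑ ≤ ENNReal.ofReal (F σ) :=
  calc ∫⁻ t in S, ‖g (σ + t)‖ₑ ≤ ∫⁻ x in Ioi σ, ‖g x‖ₑ :=
        setLIntegral_comp_const_add_le hS (fun x => ‖g x‖ₑ) σ
    _ = ∫⁻ x in Ioi σ, ‖f x‖ₑ := lintegral_congr_ae <|
        (ae_restrict_of_ae_restrict_of_subset (Ioi_subset_Ioi hσ.le) hfg).mono
          fun x hx => by simp only [hx]
    _ ≤ ENNReal.ofReal (F σ) := lintegral_Ioi_enorm_le_of_eq_add_intervalIntegral hint hf hF hF0 hσ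

theorem lintegral_enorm_smul_sq_le {α E : Type*} [MeasurableSpace α] [NormedAddCommGroup E]
    [NormedSpace ℝ E] {ν : Measure α} {k : α → ℝ} {η : α → E} (hk : AEMeasurable k ν)
    (hη : AEStronglyMeasurable η ν) :
    (∫⁻ a, ‖k a • η a‖ₑ ∂ν) ^ 2 ≤ (∫⁻ a, ‖k a‖ₑ ∂ν) * ∫⁻ a, ‖k a‖ₑ * ‖η a‖ₑ ^ 2 ∂ν := by
  simp_rw [enorm_smul]
  exact ENNReal.lintegral_mul_sq_le hk.enorm hη.enorm

section Hankel

variable {G E : Type*} [MeasurableSpace G] [AddCommMagma G] [MeasurableAdd₂ G] {ν : Measure G}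
  [SFinite ν] [NormedAddCommGroup E]

theorem lintegral_lintegral_comp_add_mul_le {K F M : G → ℝ≥0∞} (hK : Measurable K)
    (hF : AEMeasurable F ν) (htail : ∀ᵐ σ ∂ν, ∫⁻ t, K (σ + t) ∂ν ≤ M σ) :
    ∫⁻ τ, ∫⁻ s, K (τ + s) * F s ∂ν ∂ν ≤ ∫⁻ s, M s * F s ∂ν := by
  rw [lintegral_lintegral_swap ((hK.comp measurable_add).aemeasurable.mul hF.comp_snd)]
  refine lintegral_mono_ae (htail.mono fun s hs => ?_)
  rw [lintegral_mul_const _ (by fun_prop : Measurable fun τ => K (τ + s))]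
  simp_rw [add_comm _ s]
  gcongr

variable {k : G → ℝ} {η : G → E} {m : G → ℝ}

theorem lintegral_lintegral_comp_add_mul_enorm_sq_le (hk : Measurable k)
    (hη : AEStronglyMeasurable η ν)
    (htail : ∀ᵐ σ ∂ν, ∫⁻ t, ‖k (σ + t)‖ₑ ∂ν ≤ ENNReal.ofReal (m σ)) :
    ∫⁻ τ, ∫⁻ s, ‖k (τ + s)‖ₑ * ‖η s‖ₑ ^ 2 ∂ν ∂ν ≤ ∫⁻ s, ENNReal.ofReal (m s * ‖η s‖ ^ 2) ∂ν := by
  simp_rw [ENNReal.ofReal_mul' (sq_nonneg _), ENNReal.ofReal_pow (norm_nonneg _), ofReal_norm]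
  exact lintegral_lintegral_comp_add_mul_le hk.enorm (hη.enorm.pow_const 2) htail

variable [NormedSpace ℝ E]

-- With `k = μ'` this is `-Πη`.
noncomputable def hankelOp (ν : Measure G) (k : G → ℝ) (η : G → E) (τ : G) : E :=
  ∫ s, k (τ + s) • η s ∂ν

theorem aestronglyMeasurable_hankelOp {k : G → ℝ} {η : G → E} (hk : Measurable k)
    (hη : AEStronglyMeasurable η ν) : AEStronglyMeasurable (hankelOp ν k η) ν :=
  AEStronglyMeasurable.integral_prod_right' (f := fun p : G × G => k (p.1 + p.2) • η p.2)
    ((hk.comp measurable_add).aestronglyMeasurable.smul hη.comp_snd)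

theorem ae_integrable_comp_add_smul (hk : Measurable k) (hη : AEStronglyMeasurable η ν)
    (htail : ∀ᵐ σ ∂ν, ∫⁻ t, ‖k (σ + t)‖ₑ ∂ν ≤ ENNReal.ofReal (m σ))
    (hηL2 : Integrable (fun s => m s * ‖η s‖ ^ 2) ν) :
    ∀ᵐ τ ∂ν, Integrable (fun s => k (τ + s) • η s) ν := by
  have hfin : ∀ᵐ τ ∂ν, ∫⁻ s, ‖k (τ + s)‖ₑ * ‖η s‖ₑ ^ 2 ∂ν < ⊤ := by
    refine ae_lt_top' (AEMeasurable.lintegral_prod_right'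
      (f := fun p : G × G => ‖k (p.1 + p.2)‖ₑ * ‖η p.2‖ₑ ^ 2)
      ((hk.comp measurable_add).enorm.aemeasurable.mul (hη.enorm.pow_const 2).comp_snd)) ?_
    exact ((lintegral_lintegral_comp_add_mul_enorm_sq_le hk hη htail).trans_lt
      hηL2.lintegral_lt_top).ne
  filter_upwards [htail, hfin] with τ hτ hB
  refine ⟨(hk.comp (measurable_const_add τ)).aestronglyMeasurable.smul hη, ?_⟩
  have hsq := lintegral_enorm_smul_sq_le (hk.comp (measurable_const_add τ)).aemeasurable hη
  refine (ENNReal.pow_lt_top_iff.1 (hsq.trans_lt ?_)).resolve_right two_ne_zero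
  exact ENNReal.mul_lt_top (hτ.trans_lt ENNReal.ofReal_lt_top) hB

theorem integrable_and_integral_inv_mul_norm_hankelOp_sq_le (hk : Measurable k)
    (hη : AEStronglyMeasurable η ν) (hm : AEMeasurable m ν) (hm0 : 0 ≤ᵐ[ν] m)
    (htail : ∀ᵐ σ ∂ν, ∫⁻ t, ‖k (σ + t)‖ₑ ∂ν ≤ ENNReal.ofReal (m σ))
    (hηL2 : Integrable (fun s => m s * ‖η s‖ ^ 2) ν) :
    Integrable (fun τ => (m τ)⁻¹ * ‖hankelOp ν k η τ‖ ^ 2) ν ∧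
      ∫ τ, (m τ)⁻¹ * ‖hankelOp ν k η τ‖ ^ 2 ∂ν ≤ ∫ s, m s * ‖η s‖ ^ 2 ∂ν := by
  have hpt : ∀ᵐ τ ∂ν, ENNReal.ofReal ((m τ)⁻¹ * ‖hankelOp ν k η τ‖ ^ 2) ≤
      ∫⁻ s, ‖k (τ + s)‖ₑ * ‖η s‖ₑ ^ 2 ∂ν := by
    filter_upwards [htail] with τ hτ
    refine ENNReal.ofReal_inv_mul_le_of_ofReal_le_mul (sq_nonneg _) ?_
    rw [ENNReal.ofReal_pow (norm_nonneg _), ofReal_norm]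
    calc ‖hankelOp ν k η τ‖ₑ ^ 2 ≤ (∫⁻ s, ‖k (τ + s) • η s‖ₑ ∂ν) ^ 2 := by
          gcongr
          exact enorm_integral_le_lintegral_enorm _
      _ ≤ (∫⁻ s, ‖k (τ + s)‖ₑ ∂ν) * ∫⁻ s, ‖k (τ + s)‖ₑ * ‖η s‖ₑ ^ 2 ∂ν :=
          lintegral_enorm_smul_sq_le (hk.comp (measurable_const_add τ)).aemeasurable hη
      _ ≤ ENNReal.ofReal (m τ) * ∫⁻ s, ‖k (τ + s)‖ₑ * ‖η s‖ₑ ^ 2 ∂ν := by gcongr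
  refine integrable_and_integral_le_of_lintegral_ofReal_le
    (hm.inv.mul ((aestronglyMeasurable_hankelOp hk hη).norm.aemeasurable.pow_const 2)
      ).aestronglyMeasurable
    (hm0.mono fun τ hτ => mul_nonneg (inv_nonneg.2 hτ) (sq_nonneg _)) hηL2
    (hm0.mono fun s hs => mul_nonneg hs (sq_nonneg _)) ?_
  exact (lintegral_mono_ae hpt).trans (lintegral_lintegral_comp_add_mul_enorm_sq_le hk hη htail)

end Hankel

theorem stmt11_general
    {V : Type*} [NormedAddCommGroup V] [InnerProductSpace ℝ V]
    (ℓ : EReal)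
    (Ω : Set ℝ) (hΩ : Ω = {s : ℝ | 0 < s ∧ (s : EReal) < ℓ})
    (μ μ' : ℝ → ℝ)
    (hμpos : ∀ s ∈ Ω, 0 < μ s)
    (hμzero : ∀ s : ℝ, 0 < s → s ∉ Ω → μ s = 0)
    (hμmono : AntitoneOn μ (Ioi 0))
    (hμ'loc : ∀ a b : ℝ, 0 < a → IntegrableOn μ' (Icc a b))
    (hμ'le : ∀ᵐ s ∂(volume.restrict (Ioi 0)), μ' s ≤ 0)
    (hFTC : ∀ a b : ℝ, 0 < a → a ≤ b → μ b = μ a + ∫ x in a..b, μ' x)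
    (η : ℝ → V)
    (hηmeas : AEStronglyMeasurable η (volume.restrict Ω))
    (hηL2 : IntegrableOn (fun s => μ s * ‖η s‖ ^ 2) Ω) :
    (∀ᵐ τ ∂(volume.restrict Ω), IntegrableOn (fun s => μ' (τ + s) • η s) Ω) ∧
      IntegrableOn (fun τ => (μ τ)⁻¹ * ‖∫ s in Ω, μ' (τ + s) • η s‖ ^ 2) Ω ∧
      (∫ τ in Ω, (μ τ)⁻¹ * ‖∫ s in Ω, μ' (τ + s) • η s‖ ^ 2) ≤
        ∫ s in Ω, μ s * ‖η s‖ ^ 2 := by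
  have hΩpos : Ω ⊆ Ioi 0 := hΩ ▸ fun s hs => hs.1
  have hΩmeas : MeasurableSet Ω := by rw [hΩ]; measurability
  have hμnonneg : ∀ b, 0 < b → 0 ≤ μ b := fun b hb => by
    by_cases hbΩ : b ∈ Ω
    exacts [(hμpos b hbΩ).le, (hμzero b hb hbΩ).ge]
  -- A measurable representative `g` of `μ'` makes `(τ, s) ↦ g (τ + s)` jointly measurable;
  -- translations preserve null sets, so the `s`-integrals do not see the change.
  obtain ⟨g, hg, hμ'g⟩ := aemeasurable_restrict_Ioi_of_integrableOn_Icc hμ'loc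
  have hshift : ∀ τ ∈ Ω, ∀ᵐ s ∂volume.restrict Ω, μ' (τ + s) = g (τ + s) := fun τ hτ =>
    ae_restrict_of_ae_restrict_of_subset
      (hΩpos.trans (Ioi_subset_Ioi (sub_nonpos.2 (hΩpos hτ).le)))
      (ae_restrict_Ioi_comp_const_add hμ'g τ)
  have htail : ∀ᵐ σ ∂volume.restrict Ω, ∫⁻ t in Ω, ‖g (σ + t)‖ₑ ≤ ENNReal.ofReal (μ σ) :=
    ae_restrict_of_forall_mem hΩmeas fun σ hσ => setLIntegral_enorm_comp_const_add_le hΩpos hμ'g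
      hμ'loc hμ'le hFTC hμnonneg (hΩpos hσ)
  have hhankel : (fun τ => ∫ s in Ω, μ' (τ + s) • η s) =ᵐ[volume.restrict Ω]
      hankelOp (volume.restrict Ω) g η :=
    ae_restrict_of_forall_mem hΩmeas fun τ hτ =>
      integral_congr_ae ((hshift τ hτ).mono fun s hs => by simp only [hs])
  obtain ⟨hint, hle⟩ := integrable_and_integral_inv_mul_norm_hankelOp_sq_le hg hηmeas
    (aemeasurable_restrict_of_antitoneOn hΩmeas (hμmono.mono hΩpos))
    (ae_restrict_of_forall_mem hΩmeas fun s hs => (hμpos s hs).le) htail hηL2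
  have hhankel_sq := (EventuallyEq.rfl (f := fun τ => (μ τ)⁻¹)).mul
    (hhankel.fun_comp fun x => ‖x‖ ^ 2)
  refine ⟨?_, hint.congr hhankel_sq.symm, (integral_congr_ae hhankel_sq).trans_le hle⟩
  filter_upwards [ae_integrable_comp_add_smul hg hηmeas htail hηL2, ae_restrict_mem hΩmeas]
    with τ hτ hτΩ
  exact hτ.congr ((hshift τ hτΩ).mono fun s hs => by simp only [hs])

/-- Lemma `lemmaSH`. Let `μ` be extended by `0` outside `Ω`, with
a.e. derivative `μ' ≤ 0` (FTC form), and let `η ∈ L²_μ(Ω;V)`. Then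
`Πη(τ) = −∫₀^ℓ μ'(τ+s) η(s) ds` is well defined for a.e. `τ ∈ Ω`, belongs to
`L²_ν(Ω;V)` with `ν = 1/μ`, and `‖Πη‖_{L²_ν} ≤ ‖η‖_{L²_μ}`, i.e.
`∫₀^ℓ (1/μ(τ)) ‖∫₀^ℓ μ'(τ+s) η(s) ds‖² dτ ≤ ∫₀^ℓ μ(s) ‖η(s)‖² ds`. -/
theorem stmt11
    {V : Type*} [NormedAddCommGroup V] [InnerProductSpace ℝ V] [CompleteSpace V]
    (ℓ : EReal) (hℓ : 0 < ℓ)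
    (Ω : Set ℝ) (hΩ : Ω = {s : ℝ | 0 < s ∧ (s : EReal) < ℓ})
    (μ μ' : ℝ → ℝ)
    (hμpos : ∀ s ∈ Ω, 0 < μ s)
    (hμzero : ∀ s : ℝ, 0 < s → s ∉ Ω → μ s = 0)
    (hμmono : AntitoneOn μ (Ioi 0))
    (hμint : IntegrableOn μ (Ioi 0))
    (hμ'loc : ∀ a b : ℝ, 0 < a → IntegrableOn μ' (Icc a b))
    (hμ'le : ∀ᵐ s ∂(volume.restrict (Ioi 0)), μ' s ≤ 0)
    (hFTC : ∀ a b : ℝ, 0 < a → a ≤ b → μ b = μ a + ∫ x in a..b, μ' x)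
    (η : ℝ → V)
    (hηmeas : AEStronglyMeasurable η (volume.restrict Ω))
    (hηL2 : IntegrableOn (fun s => μ s * ‖η s‖ ^ 2) Ω) :
    (∀ᵐ τ ∂(volume.restrict Ω), IntegrableOn (fun s => μ' (τ + s) • η s) Ω) ∧
      IntegrableOn (fun τ => (μ τ)⁻¹ * ‖∫ s in Ω, μ' (τ + s) • η s‖ ^ 2) Ω ∧
      (∫ τ in Ω, (μ τ)⁻¹ * ‖∫ s in Ω, μ' (τ + s) • η s‖ ^ 2) ≤
        ∫ s in Ω, μ s * ‖η s‖ ^ 2 :=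
  stmt11_general ℓ Ω hΩ μ μ' hμpos hμzero hμmono hμ'loc hμ'le hFTC η hηmeas hηL2
end

section
/- Let (κ_n)_{n≥1} be a strictly increasing sequence of positive real numbers, and let (β_n)_{n≥1} be real numbers with ∑_{n=1}^∞ |β_n| < ∞. Define h : [0,∞) → ℝ by h(t) = ∑_{n=1}^∞ β_n e^{−κ_n t}. Then h(t) = 0 for all t ≥ 0 if and only if β_n = 0 for every n. -/
/-!
If all coefficients before `β n` vanish, then `e^{κ_n t} h(t) = ∑_{m ≥ n} β_m e^{(κ_n - κ_m) t}`
tends to `β n` as `t → ∞`: every term with `m > n` decays, and all terms are dominated by the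
summable `|β_m|` once `t ≥ 0`. If `h` vanishes on `[0,∞)`, this limit is `0`, so strong induction
on `n` kills every coefficient.
-/

open Filter Topology

section LeadingCoefficient

variable {κ β : ℕ → ℝ} {n : ℕ}

lemma abs_mul_exp_sub_mul_le_abs (hκ : Monotone κ) (hlow : ∀ m < n, β m = 0) {t : ℝ}
    (ht : 0 ≤ t) (m : ℕ) : |β m * Real.exp ((κ n - κ m) * t)| ≤ |β m| := by
  rcases lt_or_ge m n with hm | hm
  · simp [hlow m hm]
  · rw [abs_mul, Real.abs_exp]
    refine mul_le_of_le_one_right (abs_nonneg _) (Real.exp_le_one_iff.mpr ?_)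
    exact mul_nonpos_of_nonpos_of_nonneg (sub_nonpos.mpr (hκ hm)) ht

lemma tendsto_mul_exp_sub_mul (hκ : StrictMono κ) (hlow : ∀ m < n, β m = 0) (m : ℕ) :
    Tendsto (fun t => β m * Real.exp ((κ n - κ m) * t)) atTop
      (𝓝 (if m = n then β n else 0)) := by
  rcases lt_trichotomy m n with hm | rfl | hm
  · simp [hlow m hm, hm.ne]
  · simp
  · have hdecay : Tendsto (fun t => Real.exp ((κ n - κ m) * t)) atTop (𝓝 0) :=
      Real.tendsto_exp_atBot.comp (tendsto_id.const_mul_atTop_of_neg (sub_neg.mpr (hκ hm)))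
    simpa [hm.ne'] using hdecay.const_mul (β m)

lemma tendsto_tsum_mul_exp_sub_mul (hκ : StrictMono κ) (hβ : Summable fun m => |β m|)
    (hlow : ∀ m < n, β m = 0) :
    Tendsto (fun t => ∑' m, β m * Real.exp ((κ n - κ m) * t)) atTop (𝓝 (β n)) := by
  have hlim := tendsto_tsum_of_dominated_convergence hβ (tendsto_mul_exp_sub_mul hκ hlow)
    ((eventually_ge_atTop 0).mono fun _ ht => abs_mul_exp_sub_mul_le_abs hκ.monotone hlow ht)
  rwa [tsum_ite_eq] at hlim

end LeadingCoefficient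

lemma tsum_mul_exp_sub_mul_eq (κ β : ℕ → ℝ) (n : ℕ) (t : ℝ) :
    ∑' m, β m * Real.exp ((κ n - κ m) * t) =
      Real.exp (κ n * t) * ∑' m, β m * Real.exp (-(κ m * t)) := by
  rw [← tsum_mul_left]
  congr 1 with m
  rw [sub_mul, sub_eq_add_neg, Real.exp_add]
  ring

theorem stmt12_general
    (κ : ℕ → ℝ) (hκmono : StrictMono κ)
    (β : ℕ → ℝ) (hβ : Summable fun n => |β n|) :
    (∀ t : ℝ, 0 ≤ t → (∑' n, β n * Real.exp (-(κ n * t))) = 0) ↔ ∀ n, β n = 0 := by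
  refine ⟨fun hvanish n => ?_, fun h t _ => by simp [h]⟩
  induction n using Nat.strong_induction_on with
  | _ n ih =>
    have hshift : (fun _ => (0 : ℝ)) =ᶠ[atTop]
        fun t => ∑' m, β m * Real.exp ((κ n - κ m) * t) :=
      (eventually_ge_atTop 0).mono fun t ht => by
        simp only [tsum_mul_exp_sub_mul_eq, hvanish t ht, mul_zero]
    exact tendsto_nhds_unique (tendsto_tsum_mul_exp_sub_mul hκmono hβ ih)
      (tendsto_const_nhds.congr' hshift)

/-- Lemma `lemmaEXPZERO`. Let `(κ_n)` be strictly increasing and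
positive, and `(β_n)` absolutely summable. Then `h(t) = ∑ β_n e^{−κ_n t}` vanishes
identically on `[0,∞)` if and only if every `β_n = 0`. -/
theorem stmt12
    (κ : ℕ → ℝ) (hκpos : ∀ n, 0 < κ n) (hκmono : StrictMono κ)
    (β : ℕ → ℝ) (hβ : Summable fun n => |β n|) :
    (∀ t : ℝ, 0 ≤ t → (∑' n, β n * Real.exp (-(κ n * t))) = 0) ↔ ∀ n, β n = 0 :=
  stmt12_general κ hκmono β hβ
end

section
/- Let N ∈ ℕ, let 0 < κ_1 < … < κ_N, let a_1, …, a_N > 0, set μ(s) = ∑_{n=1}^N a_n e^{−κ_n s} on Ω = (0,∞), and let u ∈ V be a nonzero vector. Then there exist real numbers x_1, …, x_N such that the two histories η_0(s) = u and η_N(s) = (∑_{m=1}^N x_m s^m) u are distinct elements of L²_μ((0,∞);V) satisfying ∫₀^∞ μ(t+s) η_0(s) ds = ∫₀^∞ μ(t+s) η_N(s) ds for every t ≥ 0. In particular, the map Λ, Λφ(t) = ∫₀^∞ μ(t+s)φ(s) ds, is not injective on L²_μ((0,∞);V). -/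
/-!
Writing `p(s) = ∑ x_m s^m`, the kernel factors as `μ(t+s) = ∑ a_n e^{-κ_n t} e^{-κ_n s}`, so both
histories have the same state function as soon as `∫₀^∞ p(s) e^{-κ_n s} ds = ∫₀^∞ e^{-κ_n s} ds`
for every `n`. Since `∫₀^∞ s^k e^{-κ s} ds = k!/κ^{k+1}`, these are `N` linear equations in
`x_1, …, x_N`; after scaling rows and columns their matrix is the Vandermonde matrix of the distinct
nodes `1/κ_n`, so they can be solved. The histories differ because `p - 1` is a nonzero polynomial
(`p(0) = 0`) and therefore vanishes only at finitely many points.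
-/

open MeasureTheory Set Filter Polynomial

lemma integrableOn_pow_mul_exp_neg_mul_Ioi (k : ℕ) {b : ℝ} (hb : 0 < b) :
    IntegrableOn (fun s : ℝ => s ^ k * Real.exp (-(b * s))) (Ioi 0) := by
  simpa [Real.rpow_natCast] using
    integrableOn_rpow_mul_exp_neg_mul_rpow (s := k) (neg_one_lt_zero.trans_le k.cast_nonneg)
      one_pos hb

lemma integral_pow_mul_exp_neg_mul_Ioi (k : ℕ) {b : ℝ} (hb : 0 < b) :
    ∫ s in Ioi (0 : ℝ), s ^ k * Real.exp (-(b * s)) = k.factorial / b ^ (k + 1) := by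
  have h := Real.integral_rpow_mul_exp_neg_mul_Ioi (a := k + 1) (by positivity) hb
  simp only [add_sub_cancel_right, Real.rpow_natCast, Real.Gamma_nat_eq_factorial] at h
  rw [← Nat.cast_succ, Real.rpow_natCast] at h
  rw [h, div_pow, one_pow, one_div_mul_eq_div]

lemma integrableOn_eval_mul_exp_neg_mul_Ioi (q : ℝ[X]) {b : ℝ} (hb : 0 < b) :
    IntegrableOn (fun s : ℝ => q.eval s * Real.exp (-(b * s))) (Ioi 0) := by
  induction q using Polynomial.induction_on' with
  | add p q hp hq =>
    simp only [eval_add, add_mul]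
    exact hp.add hq
  | monomial k c =>
    simp only [eval_monomial, mul_assoc]
    exact (integrableOn_pow_mul_exp_neg_mul_Ioi k hb).const_mul c

lemma integral_sum_mul_pow_mul_exp_neg_mul_Ioi {ι : Type*} [Fintype ι] (x : ι → ℝ) (e : ι → ℕ)
    {b : ℝ} (hb : 0 < b) :
    ∫ s in Ioi (0 : ℝ), (∑ i, x i * s ^ e i) * Real.exp (-(b * s)) =
      ∑ i, x i * ((e i).factorial / b ^ (e i + 1)) := by
  simp only [Finset.sum_mul, mul_assoc]
  rw [integral_finsetSum _ fun i _ => (integrableOn_pow_mul_exp_neg_mul_Ioi (e i) hb).const_mul _]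
  simp only [integral_const_mul, integral_pow_mul_exp_neg_mul_Ioi _ hb]

lemma exists_sum_mul_pow_eq {R : Type*} [Field R] {n : ℕ} {v : Fin n → R}
    (hv : Function.Injective v) (c : Fin n → R) :
    ∃ z : Fin n → R, ∀ i, ∑ j : Fin n, v i ^ (j : ℕ) * z j = c i := by
  have hV : IsUnit (Matrix.vandermonde v) :=
    (Matrix.isUnit_iff_isUnit_det _).2 (Matrix.det_vandermonde_ne_zero_iff.2 hv).isUnit
  obtain ⟨z, hz⟩ := Matrix.mulVec_surjective_iff_isUnit.2 hV c
  exact ⟨z, fun i => congrFun hz i⟩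

lemma exists_sum_mul_factorial_div_pow_eq_inv {n : ℕ} {κ : Fin n → ℝ} (hκ : ∀ i, κ i ≠ 0)
    (hinj : Function.Injective κ) :
    ∃ x : Fin n → ℝ, ∀ i,
      ∑ j : Fin n, x j * ((j.1 + 1).factorial / κ i ^ (j.1 + 1 + 1)) = (κ i)⁻¹ := by
  obtain ⟨z, hz⟩ := exists_sum_mul_pow_eq (v := fun i => (κ i)⁻¹) (inv_injective.comp hinj) κ
  refine ⟨fun j => z j / (j.1 + 1).factorial, fun i => ?_⟩
  have hfac : ∀ j : Fin n, ((j.1 + 1).factorial : ℝ) ≠ 0 := fun j => by positivity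
  calc ∑ j : Fin n, z j / (j.1 + 1).factorial * ((j.1 + 1).factorial / κ i ^ (j.1 + 1 + 1))
      = (κ i)⁻¹ ^ 2 * ∑ j : Fin n, (κ i)⁻¹ ^ (j : ℕ) * z j := by
        rw [Finset.mul_sum]
        refine Finset.sum_congr rfl fun j _ => ?_
        simp only [inv_pow]
        field_simp [hfac j, hκ i]
        ring
    _ = (κ i)⁻¹ := by
        rw [hz i]
        field_simp [hκ i]

lemma integrableOn_sum_exp_neg_mul_mul_eval_Ioi {ι : Type*} [Fintype ι] (a κ : ι → ℝ)
    (hκ : ∀ i, 0 < κ i) (q : ℝ[X]) :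
    IntegrableOn (fun s : ℝ => (∑ i, a i * Real.exp (-(κ i * s))) * q.eval s) (Ioi 0) := by
  simp only [Finset.sum_mul]
  refine integrable_finsetSum _ fun i _ => ?_
  simpa only [mul_comm, mul_left_comm] using
    (integrableOn_eval_mul_exp_neg_mul_Ioi q (hκ i)).const_mul (a i)

lemma integral_sum_exp_neg_mul_add_mul_Ioi {ι : Type*} [Fintype ι] (a κ : ι → ℝ) (t : ℝ)
    {f : ℝ → ℝ} (hf : ∀ i, IntegrableOn (fun s => f s * Real.exp (-(κ i * s))) (Ioi 0)) :
    ∫ s in Ioi (0 : ℝ), (∑ i, a i * Real.exp (-(κ i * (t + s)))) * f s =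
      ∑ i, a i * Real.exp (-(κ i * t)) * ∫ s in Ioi (0 : ℝ), f s * Real.exp (-(κ i * s)) := by
  have hsplit : ∀ s, (∑ i, a i * Real.exp (-(κ i * (t + s)))) * f s =
      ∑ i, a i * Real.exp (-(κ i * t)) * (f s * Real.exp (-(κ i * s))) := fun s => by
    rw [Finset.sum_mul]
    refine Finset.sum_congr rfl fun i _ => ?_
    rw [mul_add, neg_add, Real.exp_add]
    ring
  simp only [hsplit]
  rw [integral_finsetSum _ fun i _ => (hf i).const_mul _]
  simp only [integral_const_mul]

lemma not_const_ae_eq_eval_smul {V : Type*} [AddCommGroup V] [Module ℝ V] {u : V} (hu : u ≠ 0)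
    {q : ℝ[X]} (hq : q ≠ 1) :
    ¬ (fun _ : ℝ => u) =ᵐ[volume.restrict (Ioi (0 : ℝ))] fun s => q.eval s • u := by
  intro h
  have hfin : {s : ℝ | q.eval s = 1}.Finite := by
    simpa [sub_eq_zero] using Polynomial.finite_setOfPred_isRoot (sub_ne_zero.2 hq)
  have : (ae (volume.restrict (Ioi (0 : ℝ)))).NeBot := ae_neBot.2 (by simp)
  obtain ⟨s, hs, hs1⟩ :=
    (h.and (ae_restrict_of_ae (measure_eq_zero_iff_ae_notMem.1 (hfin.measure_zero volume)))).exists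
  exact hs1 (smul_left_injective ℝ hu (hs.symm.trans (one_smul ℝ u).symm))

theorem stmt14_general
    {V : Type*} [NormedAddCommGroup V] [InnerProductSpace ℝ V] [CompleteSpace V]
    (N : ℕ) (κ a : Fin N → ℝ)
    (hκpos : ∀ n, 0 < κ n) (hκmono : StrictMono κ)
    (u : V) (hu : u ≠ 0) :
    ∃ x : Fin N → ℝ,
      ¬ ((fun _ : ℝ => u) =ᵐ[volume.restrict (Ioi (0:ℝ))]
          (fun s : ℝ => (∑ m : Fin N, x m * s ^ (m.1 + 1)) • u)) ∧
      IntegrableOn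
        (fun s : ℝ => (∑ n : Fin N, a n * Real.exp (-(κ n * s))) * ‖u‖ ^ 2)
        (Ioi 0) ∧
      IntegrableOn
        (fun s : ℝ => (∑ n : Fin N, a n * Real.exp (-(κ n * s))) *
          ‖(∑ m : Fin N, x m * s ^ (m.1 + 1)) • u‖ ^ 2) (Ioi 0) ∧
      ∀ t : ℝ, 0 ≤ t →
        (∫ s in Ioi (0:ℝ), (∑ n : Fin N, a n * Real.exp (-(κ n * (t + s)))) • u) =
          ∫ s in Ioi (0:ℝ),
            (∑ n : Fin N, a n * Real.exp (-(κ n * (t + s)))) •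
              ((∑ m : Fin N, x m * s ^ (m.1 + 1)) • u) := by
  obtain ⟨x, hx⟩ :=
    exists_sum_mul_factorial_div_pow_eq_inv (fun n => (hκpos n).ne') hκmono.injective
  set P : ℝ[X] := ∑ m : Fin N, C (x m) * X ^ (m.1 + 1)
  have hP : ∀ s, P.eval s = ∑ m : Fin N, x m * s ^ (m.1 + 1) := fun s => by
    simp [P, eval_finsetSum]
  have hP1 : P ≠ 1 := fun h => by simpa [hP] using congrArg (Polynomial.eval 0) h
  refine ⟨x, ?_, ?_, ?_, fun t _ => ?_⟩
  · simpa only [← hP] using not_const_ae_eq_eval_smul hu hP1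
  · have hμ := integrableOn_sum_exp_neg_mul_mul_eval_Ioi a κ hκpos 1
    simp only [eval_one, mul_one] at hμ
    exact hμ.mul_const _
  · have hsq : ∀ s, ‖P.eval s • u‖ ^ 2 = (P ^ 2).eval s * ‖u‖ ^ 2 := fun s => by
      rw [norm_smul, mul_pow, Real.norm_eq_abs, sq_abs, eval_pow]
    simp only [← hP, hsq, ← mul_assoc]
    exact (integrableOn_sum_exp_neg_mul_mul_eval_Ioi a κ hκpos (P ^ 2)).mul_const _
  · have hmass := integral_sum_exp_neg_mul_add_mul_Ioi a κ t (f := fun _ => 1)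
      fun n => by simpa using integrableOn_eval_mul_exp_neg_mul_Ioi 1 (hκpos n)
    have hmoment := integral_sum_exp_neg_mul_add_mul_Ioi a κ t (f := P.eval)
      fun n => integrableOn_eval_mul_exp_neg_mul_Ioi P (hκpos n)
    simp only [mul_one, one_mul] at hmass
    simp only [smul_smul, integral_smul_const, ← hP, hmass, hmoment]
    refine congrArg (· • u) (Finset.sum_congr rfl fun n _ => congrArg _ ?_)
    calc ∫ s in Ioi (0 : ℝ), Real.exp (-(κ n * s)) = (κ n)⁻¹ := by
          simpa using integral_pow_mul_exp_neg_mul_Ioi 0 (hκpos n)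
      _ = ∫ s in Ioi (0 : ℝ), P.eval s * Real.exp (-(κ n * s)) := by
          simp only [hP, integral_sum_mul_pow_mul_exp_neg_mul_Ioi _ _ (hκpos n), hx n]

/-- Example `EXNN`. For the kernel
`μ(s) = ∑_{n=1}^N a_n e^{−κ_n s}` on `(0,∞)` and a nonzero `u ∈ V`, there exist reals
`x_1, …, x_N` such that the histories `η₀(s) = u` and `η_N(s) = (∑ x_m s^m) u` are
distinct elements of `L²_μ((0,∞);V)` with `Λη₀(t) = Λη_N(t)` for every `t ≥ 0`;
hence `Λ` is not injective on `L²_μ((0,∞);V)`. -/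
theorem stmt14
    {V : Type*} [NormedAddCommGroup V] [InnerProductSpace ℝ V] [CompleteSpace V]
    (N : ℕ) (hN : 0 < N) (κ a : Fin N → ℝ)
    (hκpos : ∀ n, 0 < κ n) (hκmono : StrictMono κ) (hapos : ∀ n, 0 < a n)
    (u : V) (hu : u ≠ 0) :
    ∃ x : Fin N → ℝ,
      ¬ ((fun _ : ℝ => u) =ᵐ[volume.restrict (Ioi (0:ℝ))]
          (fun s : ℝ => (∑ m : Fin N, x m * s ^ (m.1 + 1)) • u)) ∧
      IntegrableOn
        (fun s : ℝ => (∑ n : Fin N, a n * Real.exp (-(κ n * s))) * ‖u‖ ^ 2)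
        (Ioi 0) ∧
      IntegrableOn
        (fun s : ℝ => (∑ n : Fin N, a n * Real.exp (-(κ n * s))) *
          ‖(∑ m : Fin N, x m * s ^ (m.1 + 1)) • u‖ ^ 2) (Ioi 0) ∧
      ∀ t : ℝ, 0 ≤ t →
        (∫ s in Ioi (0:ℝ), (∑ n : Fin N, a n * Real.exp (-(κ n * (t + s)))) • u) =
          ∫ s in Ioi (0:ℝ),
            (∑ n : Fin N, a n * Real.exp (-(κ n * (t + s)))) •
              ((∑ m : Fin N, x m * s ^ (m.1 + 1)) • u) :=
  stmt14_general N κ a hκpos hκmono u hu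
end

section
/- Let δ, c₂, c₃ > 0, and let E : [0,∞) → [0,∞), Φ : [0,∞) → ℝ be differentiable and X : [0,∞) → [0,∞) be such that for all t ≥ 0: E′(t) ≤ −(δ/2) X(t), Φ′(t) + E(t) ≤ c₂ X(t), and |Φ(t)| ≤ c₃ E(t). Set ε = min{δ/(2c₂), 1/(2c₃)} and ω = ε/3. Then E(t) ≤ 3 E(0) e^{−2ωt} for all t ≥ 0. -/
open Set Filter

/-- abstract energy decay lemma. Let `δ, c₂, c₃ > 0`, let
`E : [0,∞) → [0,∞)` and `Φ : [0,∞) → ℝ` be differentiable (with right derivatives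
`E'`, `Φ'` on `[0,∞)`), and `X : [0,∞) → [0,∞)`, with `E' ≤ −(δ/2)X`,
`Φ' + E ≤ c₂ X` and `|Φ| ≤ c₃ E` on `[0,∞)`. Setting
`ε = min (δ/(2c₂)) (1/(2c₃))` and `ω = ε/3`, one has
`E(t) ≤ 3 E(0) e^{−2ωt}` for all `t ≥ 0`. -/
theorem stmt17
    (δ c₂ c₃ : ℝ) (hδ : 0 < δ) (hc₂ : 0 < c₂) (hc₃ : 0 < c₃)
    (E Φ X E' Φ' : ℝ → ℝ)
    (hEnonneg : ∀ t : ℝ, 0 ≤ t → 0 ≤ E t)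
    (hXnonneg : ∀ t : ℝ, 0 ≤ t → 0 ≤ X t)
    (hE : ∀ t : ℝ, 0 ≤ t → HasDerivWithinAt E (E' t) (Ici 0) t)
    (hΦ : ∀ t : ℝ, 0 ≤ t → HasDerivWithinAt Φ (Φ' t) (Ici 0) t)
    (h1 : ∀ t : ℝ, 0 ≤ t → E' t ≤ -(δ / 2) * X t)
    (h2 : ∀ t : ℝ, 0 ≤ t → Φ' t + E t ≤ c₂ * X t)
    (h3 : ∀ t : ℝ, 0 ≤ t → |Φ t| ≤ c₃ * E t) :
    ∀ t : ℝ, 0 ≤ t →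
      E t ≤ 3 * E 0 *
        Real.exp (-2 * (min (δ / (2 * c₂)) (1 / (2 * c₃)) / 3) * t) := by
  intro t ht
  set ε := min (δ / (2 * c₂)) (1 / (2 * c₃)) with hεdef
  have hε : 0 < ε := lt_min (by positivity) (by positivity)
  have hεc₂ : ε * c₂ ≤ δ / 2 := by
    have h := min_le_left (δ / (2 * c₂)) (1 / (2 * c₃))
    rw [le_div_iff₀ (by positivity)] at h
    nlinarith
  have hεc₃ : ε * c₃ ≤ 1 / 2 := by
    have h := min_le_right (δ / (2 * c₂)) (1 / (2 * c₃))
    rw [le_div_iff₀ (by positivity)] at h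
    nlinarith
  -- bounds on the Lyapunov function L = E + εΦ
  have hΦbd : ∀ s : ℝ, 0 ≤ s → ε * |Φ s| ≤ (1 / 2) * E s := by
    intro s hs
    have h := h3 s hs
    have hE0 := hEnonneg s hs
    nlinarith [abs_nonneg (Φ s)]
  have hL_lb : ∀ s : ℝ, 0 ≤ s → E s ≤ 2 * (E s + ε * Φ s) := by
    intro s hs
    have h := hΦbd s hs
    have h2' := neg_abs_le (Φ s)
    nlinarith
  have hL_ub : ∀ s : ℝ, 0 ≤ s → E s + ε * Φ s ≤ (3 / 2) * E s := by
    intro s hs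
    have h := hΦbd s hs
    have h2' := le_abs_self (Φ s)
    nlinarith
  -- the function f s = (E s + ε Φ s) * exp(2ω s) is antitone on [0, ∞)
  set f : ℝ → ℝ := fun s => (E s + ε * Φ s) * Real.exp (2 * (ε / 3) * s) with hfdef
  have hexp : ∀ s : ℝ, HasDerivAt (fun s : ℝ => Real.exp (2 * (ε / 3) * s))
      (Real.exp (2 * (ε / 3) * s) * (2 * (ε / 3))) s := by
    intro s
    have := ((hasDerivAt_id s).const_mul (2 * (ε / 3))).exp
    simpa using this
  have hf : ∀ s : ℝ, 0 ≤ s → HasDerivWithinAt f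
      ((E' s + ε * Φ' s) * Real.exp (2 * (ε / 3) * s) +
        (E s + ε * Φ s) * (Real.exp (2 * (ε / 3) * s) * (2 * (ε / 3)))) (Ici 0) s := by
    intro s hs
    exact ((hE s hs).add ((hΦ s hs).const_mul ε)).mul (hexp s).hasDerivWithinAt
  have hDnonpos : ∀ s : ℝ, 0 ≤ s →
      (E' s + ε * Φ' s) * Real.exp (2 * (ε / 3) * s) +
        (E s + ε * Φ s) * (Real.exp (2 * (ε / 3) * s) * (2 * (ε / 3))) ≤ 0 := by
    intro s hs
    have hA : E' s + ε * Φ' s + 2 * (ε / 3) * (E s + ε * Φ s) ≤ 0 := by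
      have ha := h1 s hs
      have hb := h2 s hs
      have hx := hXnonneg s hs
      have hub := hL_ub s hs
      have hE0 := hEnonneg s hs
      nlinarith [mul_le_mul_of_nonneg_right hεc₂ hx,
        mul_le_mul_of_nonneg_left hb hε.le,
        mul_le_mul_of_nonneg_left hub (by positivity : (0:ℝ) ≤ 2 * (ε / 3))]
    have hep := Real.exp_pos (2 * (ε / 3) * s)
    nlinarith
  have hcont : ContinuousOn f (Ici 0) := fun s hs => (hf s hs).continuousWithinAt
  have hanti : AntitoneOn f (Ici 0) := by
    apply antitoneOn_of_deriv_nonpos (convex_Ici 0) hcont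
    · intro x hx
      rw [interior_Ici] at hx
      exact ((hf x hx.le).hasDerivAt (Ici_mem_nhds hx)).differentiableAt.differentiableWithinAt
    intro x hx
    rw [interior_Ici] at hx
    have hx0 : (0:ℝ) ≤ x := le_of_lt hx
    have hd : HasDerivAt f
        ((E' x + ε * Φ' x) * Real.exp (2 * (ε / 3) * x) +
          (E x + ε * Φ x) * (Real.exp (2 * (ε / 3) * x) * (2 * (ε / 3)))) x :=
      (hf x hx0).hasDerivAt (Ici_mem_nhds hx)
    rw [hd.deriv]
    exact hDnonpos x hx0
  have hft : f t ≤ f 0 := hanti (self_mem_Ici) ht ht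
  have hf0 : f 0 ≤ (3 / 2) * E 0 := by
    have := hL_ub 0 le_rfl
    simp only [hfdef, mul_zero, Real.exp_zero, mul_one]
    exact this
  have hkey : E t * Real.exp (2 * (ε / 3) * t) ≤ 3 * E 0 := by
    have h1' : E t * Real.exp (2 * (ε / 3) * t) ≤ 2 * f t := by
      have := mul_le_mul_of_nonneg_right (hL_lb t ht) (Real.exp_pos (2 * (ε / 3) * t)).le
      simp only [hfdef]
      nlinarith
    nlinarith
  have heq : -2 * (ε / 3) * t = -(2 * (ε / 3) * t) := by ring
  rw [heq, Real.exp_neg, ← div_eq_mul_inv, le_div_iff₀ (Real.exp_pos _)]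
  exact hkey
end
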